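/- arXiv:2108.09431 — 7 statements merged into one kernel-verified Lean document; each statement's English description precedes it below -/
import Mathlib

section
/- Under the change-point model, for every integer k with 1 ≤ k ≤ L°(θ), the expectation of the lag-k Rice statistic equals E[S_k] = 2nσ² + k·(V(θ) − 2σ²). -/
/-!
Each summand of `S_k` has expectation `(θ_{i+1} - θ_{i+1+k})² + 2σ²`, because `ε_{i+1}` and
`ε_{i+1+k}` are independent and centred with variance `σ²`. A lag-`k` difference of `θ` telescopes
into `k` consecutive increments `θ_m - θ_{m+1}`; when `k ≤ L°(θ)` at most one of them is nonzero,
so its square is the sum of their squares. Moreover every jump of `θ` lies at distance at least `k`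
from both ends of `{1, …, n}`, so the `n - k` windows count each squared jump exactly `k` times.
-/

open MeasureTheory ProbabilityTheory Finset

/-- The minimal length of a maximal run of consecutive indices within `{1, …, n}`
(read linearly, without wrapping around) on which `θ` is constant. -/
noncomputable def linMinSeg (n : ℕ) (θ : ℤ → ℝ) : ℕ :=
  sInf {d : ℕ | 0 < d ∧ ∃ i : ℕ, i + d ≤ n ∧
    (i = 0 ∨ θ i ≠ θ (i + 1)) ∧
    (i + d = n ∨ θ (i + d) ≠ θ (i + d + 1)) ∧
    ∀ e : ℕ, 0 < e → e < d → θ (i + e) = θ (i + e + 1)}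

/-- The lag-`k` Rice statistic `S_k = ∑_{i=1}^{n-k} (X_i - X_{i+k})²`, `X_i = θ_i + ε_i`. -/
def Sstat (n : ℕ) (θ : ℤ → ℝ) {Ω : Type*} (ε : ℤ → Ω → ℝ) (k : ℕ) (ω : Ω) : ℝ :=
  ∑ i ∈ Finset.range (n - k),
    ((θ (i + 1) + ε (i + 1) ω) - (θ (i + 1 + k) + ε (i + 1 + k) ω)) ^ 2

section Runs

variable {n k : ℕ} {θ : ℤ → ℝ}

lemma linMinSeg_le_sub {p q : ℕ} (hpq : p < q) (hqn : q ≤ n)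
    (hp : p = 0 ∨ θ p ≠ θ (p + 1)) (hq : q = n ∨ θ q ≠ θ (q + 1)) :
    linMinSeg n θ ≤ q - p := by
  classical
  -- The first run boundary after `p` ends a maximal run that starts at `p`.
  let IsRunEnd : ℕ → Prop := fun d => 0 < d ∧ (p + d = n ∨ θ (p + d) ≠ θ (p + d + 1))
  have hq' : IsRunEnd (q - p) := by
    refine ⟨by omega, ?_⟩
    rw [show ((p : ℤ) + (q - p : ℕ)) = q by omega, show p + (q - p) = q by omega]
    exact hq
  have hend : ∃ d, IsRunEnd d := ⟨q - p, hq'⟩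
  have hle := Nat.find_min' hend hq'
  obtain ⟨hpos, hclosed⟩ := Nat.find_spec hend
  refine (Nat.sInf_le ?_).trans hle
  refine ⟨hpos, p, by omega, hp, hclosed, fun e he hed => ?_⟩
  have := Nat.find_min hend hed
  simp only [IsRunEnd, not_and, not_or, not_not] at this
  exact (this he).2

lemma linMinSeg_le (n : ℕ) (θ : ℤ → ℝ) : linMinSeg n θ ≤ n := by
  rcases Nat.eq_zero_or_pos n with rfl | hn
  · refine (Nat.sInf_eq_zero.2 (Or.inr ?_)).le
    ext d
    simp only [Set.mem_ofPred_eq, Set.mem_empty_iff_false, iff_false]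
    omega
  · simpa using linMinSeg_le_sub (θ := θ) hn le_rfl (Or.inl rfl) (Or.inl rfl)

lemma le_and_add_le_of_jump (hkL : k ≤ linMinSeg n θ) {m : ℕ} (hm : 0 < m) (hmn : m < n)
    (hjump : θ m ≠ θ (m + 1)) : k ≤ m ∧ m + k ≤ n := by
  have h₀ := linMinSeg_le_sub hm hmn.le (Or.inl rfl) (Or.inr hjump)
  have h₁ := linMinSeg_le_sub hmn le_rfl (Or.inr hjump) (Or.inl rfl)
  omega

lemma add_le_of_jumps (hkL : k ≤ linMinSeg n θ) {p q : ℕ} (hpq : p < q) (hqn : q < n)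
    (hp : θ p ≠ θ (p + 1)) (hq : θ q ≠ θ (q + 1)) : p + k ≤ q := by
  have := linMinSeg_le_sub hpq hqn.le (Or.inr hp) (Or.inr hq)
  omega

end Runs

lemma sq_sum_eq_sum_sq_of_pairwise {ι R : Type*} [CommSemiring R] {s : Finset ι} {b : ι → R}
    (h : (s : Set ι).Pairwise fun i j => b i * b j = 0) :
    (∑ i ∈ s, b i) ^ 2 = ∑ i ∈ s, b i ^ 2 := by
  rw [sq, sum_mul_sum]
  refine sum_congr rfl fun i hi => ?_
  rw [sum_eq_single_of_mem i hi fun j hj hji => h hi hj hji.symm, sq]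

section Windows

variable {M : Type*} [AddCommMonoid M] {n k : ℕ} {f : ℕ → M}

lemma sum_Ico_eq_sum_Icc_of_support (hf : ∀ m ∈ Ico 1 n, f m ≠ 0 → m ∈ Icc k (n - k))
    {a b : ℕ} (ha₁ : 1 ≤ a) (ha : a ≤ k) (hb : n - k < b) (hbn : b ≤ n) :
    ∑ m ∈ Ico a b, f m = ∑ m ∈ Icc k (n - k), f m := by
  refine (sum_subset (fun m hm => ?_) fun m hm hm' => ?_).symm
  · simp only [mem_Icc, mem_Ico] at hm ⊢
    omega
  · by_contra hfm
    exact hm' (hf m (by simp only [mem_Ico] at hm ⊢; omega) hfm)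

lemma sum_range_sum_window (hk : 1 ≤ k) (hkn : k ≤ n)
    (hf : ∀ m ∈ Ico 1 n, f m ≠ 0 → m ∈ Icc k (n - k)) :
    ∑ i ∈ range (n - k), ∑ e ∈ range k, f (i + 1 + e) = k • ∑ i ∈ range (n - 1), f (i + 1) := by
  have hshift : ∀ c N, ∑ i ∈ range N, f (i + c) = ∑ m ∈ Ico c (N + c), f m := fun c N => by
    rw [range_eq_Ico, sum_Ico_add', zero_add]
  have hwindow : ∀ e ∈ range k, ∑ i ∈ range (n - k), f (i + 1 + e) = ∑ m ∈ Icc k (n - k), f m :=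
    fun e he => by
      rw [mem_range] at he
      simp_rw [add_assoc]
      rw [hshift, sum_Ico_eq_sum_Icc_of_support hf (by omega) (by omega) (by omega) (by omega)]
  rw [sum_comm, sum_congr rfl hwindow, sum_const, card_range, hshift,
    sum_Ico_eq_sum_Icc_of_support hf le_rfl hk (by omega) (by omega)]

end Windows

section Lag

variable {n k : ℕ} {θ : ℤ → ℝ}

lemma sq_sub_lag_eq_sum_sq (hkL : k ≤ linMinSeg n θ) {i : ℕ} (hi : i + k < n) :
    (θ (i + 1) - θ (i + 1 + k)) ^ 2
      = ∑ e ∈ range k, (θ ↑(i + 1 + e) - θ (↑(i + 1 + e) + 1)) ^ 2 := by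
  have htel : θ (i + 1) - θ (i + 1 + k)
      = ∑ e ∈ range k, (θ ↑(i + 1 + e) - θ (↑(i + 1 + e) + 1)) := by
    have := sum_range_sub' (fun e : ℕ => θ ↑(i + 1 + e)) k
    push_cast at this ⊢
    simpa only [add_zero, add_assoc] using this.symm
  rw [htel, sq_sum_eq_sum_sq_of_pairwise]
  intro e he e' he' hne
  by_contra h
  obtain ⟨hjump, hjump'⟩ := mul_ne_zero_iff.1 h
  rw [sub_ne_zero] at hjump hjump'
  simp only [coe_range, Set.mem_Iio] at he he'
  rcases hne.lt_or_gt with hlt | hlt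
  · have := add_le_of_jumps hkL (by omega : i + 1 + e < i + 1 + e') (by omega) hjump hjump'
    omega
  · have := add_le_of_jumps hkL (by omega : i + 1 + e' < i + 1 + e) (by omega) hjump' hjump
    omega

lemma sum_sq_sub_lag (hk : 1 ≤ k) (hkL : k ≤ linMinSeg n θ) :
    ∑ i ∈ range (n - k), (θ (i + 1) - θ (i + 1 + k)) ^ 2
      = k * ∑ i ∈ range (n - 1), (θ (i + 1) - θ (i + 2)) ^ 2 := by
  have hsupport : ∀ m ∈ Ico 1 n, (θ m - θ (m + 1)) ^ 2 ≠ 0 → m ∈ Icc k (n - k) := by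
    intro m hm hjump
    rw [mem_Ico] at hm
    have := le_and_add_le_of_jump hkL hm.1 hm.2 (sub_ne_zero.1 (ne_zero_pow two_ne_zero hjump))
    rw [mem_Icc]
    omega
  calc ∑ i ∈ range (n - k), (θ (i + 1) - θ (i + 1 + k)) ^ 2
      = ∑ i ∈ range (n - k), ∑ e ∈ range k, (θ ↑(i + 1 + e) - θ (↑(i + 1 + e) + 1)) ^ 2 :=
        sum_congr rfl fun i hi => sq_sub_lag_eq_sum_sq hkL (by rw [mem_range] at hi; omega)
    _ = k • ∑ i ∈ range (n - 1), (θ ↑(i + 1) - θ (↑(i + 1) + 1)) ^ 2 :=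
        sum_range_sum_window (f := fun m : ℕ => (θ m - θ (m + 1)) ^ 2) hk
          (hkL.trans (linMinSeg_le n θ)) hsupport
    _ = k * ∑ i ∈ range (n - 1), (θ (i + 1) - θ (i + 2)) ^ 2 := by
        simp only [nsmul_eq_mul, Nat.cast_add, Nat.cast_one, add_assoc, one_add_one_eq_two]

end Lag

section Moments

variable {Ω : Type*} [MeasurableSpace Ω] {P : Measure Ω} [IsProbabilityMeasure P]

lemma integral_sq_add_sub_add_of_indepFun {f g : Ω → ℝ} (a b : ℝ) (hf : MemLp f 2 P)
    (hg : MemLp g 2 P) (hfg : IndepFun f g P) (hf0 : ∫ ω, f ω ∂P = 0) (hg0 : ∫ ω, g ω ∂P = 0) :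
    ∫ ω, ((a + f ω) - (b + g ω)) ^ 2 ∂P = (a - b) ^ 2 + ∫ ω, f ω ^ 2 ∂P + ∫ ω, g ω ^ 2 ∂P := by
  have hfi := hf.integrable one_le_two
  have hgi := hg.integrable one_le_two
  have hmean : ∫ ω, (a - b) + (f ω - g ω) ∂P = a - b := by
    rw [integral_add (integrable_const _) (g := fun ω => f ω - g ω) (hfi.sub hgi),
      integral_sub hfi hgi, hf0, hg0]
    simp
  have hvar : Var[fun ω => (a - b) + (f ω - g ω); P] = ∫ ω, f ω ^ 2 ∂P + ∫ ω, g ω ^ 2 ∂P := by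
    rw [variance_const_add (X := fun ω => f ω - g ω) (hf.sub hg).aestronglyMeasurable,
      variance_fun_sub hf hg, hfg.covariance_eq_zero hf hg,
      variance_of_integral_eq_zero hf.aemeasurable hf0,
      variance_of_integral_eq_zero hg.aemeasurable hg0]
    ring
  have h := variance_eq_sub (X := fun ω => (a - b) + (f ω - g ω))
    ((memLp_const (a - b)).add (hf.sub hg))
  simp only [Pi.pow_apply, hmean, hvar] at h
  have hrw : ∀ ω, ((a + f ω) - (b + g ω)) ^ 2 = ((a - b) + (f ω - g ω)) ^ 2 := fun ω => by ring
  simp only [hrw]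
  linear_combination -h

lemma integral_sq_add_sub_add_of_iIndepFun {ι : Type*} {Y : ι → Ω → ℝ} {Z : Ω → ℝ}
    (hindep : iIndepFun Y P) (hident : ∀ i, IdentDistrib (Y i) Z P P) (hZ : MemLp Z 2 P)
    (hZ0 : ∫ ω, Z ω ∂P = 0) {i j : ι} (hij : i ≠ j) (a b : ℝ) :
    ∫ ω, ((a + Y i ω) - (b + Y j ω)) ^ 2 ∂P = (a - b) ^ 2 + 2 * ∫ ω, Z ω ^ 2 ∂P := by
  have hsq : ∀ l, ∫ ω, Y l ω ^ 2 ∂P = ∫ ω, Z ω ^ 2 ∂P := fun l =>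
    ((hident l).comp (measurable_id.pow_const 2)).integral_eq
  rw [integral_sq_add_sub_add_of_indepFun a b ((hident i).symm.memLp_snd hZ)
    ((hident j).symm.memLp_snd hZ) (hindep.indepFun hij) ((hident i).integral_eq.trans hZ0)
    ((hident j).integral_eq.trans hZ0), hsq, hsq]
  ring

end Moments

theorem expectation_Sstat_general
    (n : ℕ)
    (θ : ℤ → ℝ)
    {Ω : Type*} [MeasurableSpace Ω] (P : Measure Ω) [IsProbabilityMeasure P]
    (ε : ℤ → Ω → ℝ)
    (hindep : iIndepFun (fun i : Fin n => ε ((i : ℕ) + 1)) P)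
    (hident : ∀ i : Fin n, IdentDistrib (ε ((i : ℕ) + 1)) (ε 1) P P)
    (σ : ℝ)
    (hL4 : MemLp (ε 1) 4 P)
    (hmean : ∫ ω, ε 1 ω ∂P = 0)
    (hvar : ∫ ω, (ε 1 ω) ^ 2 ∂P = σ ^ 2)
    (k : ℕ) (hk : 1 ≤ k) (hkL : k ≤ linMinSeg n θ) :
    ∫ ω, Sstat n θ ε k ω ∂P
      = 2 * n * σ ^ 2
        + k * ((∑ i ∈ Finset.range (n - 1), (θ (i + 1) - θ (i + 2)) ^ 2) - 2 * σ ^ 2) := by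
  have hkn : k ≤ n := hkL.trans (linMinSeg_le n θ)
  have hL2 : MemLp (ε 1) 2 P := hL4.mono_exponent (by norm_num)
  have hY : ∀ j : Fin n, MemLp (ε ((j : ℕ) + 1)) 2 P := fun j => (hident j).symm.memLp_snd hL2
  have hlag : ∀ i : ℕ, ε (i + 1 + k) = ε ((i + k : ℕ) + 1) := fun i => by
    push_cast
    ring_nf
  have hterm : ∀ i ∈ range (n - k),
      ∫ ω, ((θ (i + 1) + ε (i + 1) ω) - (θ (i + 1 + k) + ε (i + 1 + k) ω)) ^ 2 ∂P
        = (θ (i + 1) - θ (i + 1 + k)) ^ 2 + 2 * σ ^ 2 := fun i hi => by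
    rw [mem_range] at hi
    rw [hlag, ← hvar]
    exact integral_sq_add_sub_add_of_iIndepFun hindep hident hL2 hmean
      (i := ⟨i, by omega⟩) (j := ⟨i + k, by omega⟩) (Fin.ne_of_val_ne (by simp only; omega)) _ _
  have hint : ∀ i ∈ range (n - k), Integrable
      (fun ω => ((θ (i + 1) + ε (i + 1) ω) - (θ (i + 1 + k) + ε (i + 1 + k) ω)) ^ 2) P :=
    fun i hi => by
    rw [mem_range] at hi
    rw [hlag]
    exact (((memLp_const (θ (i + 1))).add (hY ⟨i, by omega⟩)).sub
      ((memLp_const (θ (i + 1 + k))).add (hY ⟨i + k, by omega⟩))).integrable_sq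
  unfold Sstat
  rw [integral_finsetSum _ hint, sum_congr rfl hterm, sum_add_distrib, sum_const,
    card_range, nsmul_eq_mul, sum_sq_sub_lag hk hkL, Nat.cast_sub hkn]
  ring

theorem expectation_Sstat
    (n : ℕ) (hn : 2 ≤ n)
    (θ : ℤ → ℝ) (hθper : ∀ i : ℤ, θ (i + n) = θ i)
    {Ω : Type*} [MeasurableSpace Ω] (P : Measure Ω) [IsProbabilityMeasure P]
    (ε : ℤ → Ω → ℝ) (hεper : ∀ (i : ℤ) (ω : Ω), ε (i + n) ω = ε i ω)
    (hmeas : ∀ i : ℤ, Measurable (ε i))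
    (hindep : iIndepFun (fun i : Fin n => ε ((i : ℕ) + 1)) P)
    (hident : ∀ i : Fin n, IdentDistrib (ε ((i : ℕ) + 1)) (ε 1) P P)
    (σ κ₄ : ℝ) (hσ : 0 < σ)
    (hL4 : MemLp (ε 1) 4 P)
    (hmean : ∫ ω, ε 1 ω ∂P = 0)
    (hvar : ∫ ω, (ε 1 ω) ^ 2 ∂P = σ ^ 2)
    (hκ : ∫ ω, (ε 1 ω) ^ 4 ∂P = κ₄ * σ ^ 4)
    (k : ℕ) (hk : 1 ≤ k) (hkL : k ≤ linMinSeg n θ) :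
    ∫ ω, Sstat n θ ε k ω ∂P
      = 2 * n * σ ^ 2
        + k * ((∑ i ∈ Finset.range (n - 1), (θ (i + 1) - θ (i + 2)) ^ 2) - 2 * σ ^ 2) :=
  expectation_Sstat_general n θ P ε hindep hident σ hL4 hmean hvar k hk hkL
end

section
/- For a cyclically indexed vector θ ∈ ℝⁿ: (i) for every integer k with 1 ≤ k ≤ L(θ)/2 and every index i, (θ_i − θ_{i+k})(θ_{i+k} − θ_{i+2k}) = 0; (ii) for every integer k with 1 ≤ k ≤ L(θ), Σ_{i=1}^n (θ_i − θ_{i+k})² = k·W(θ). -/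
open Finset

/-- The minimal length of a maximal set of cyclically consecutive indices on which the
`n`-periodic sequence `θ` is constant (equal to `n` when `θ` is constant). -/
noncomputable def cycMinSeg (n : ℕ) (θ : ℤ → ℝ) : ℕ :=
  sInf ({n} ∪ {d : ℕ | 0 < d ∧ ∃ i : ℤ,
    θ i ≠ θ (i + 1) ∧ θ (i + d) ≠ θ (i + d + 1) ∧
    ∀ e : ℕ, 0 < e → e < d → θ (i + e) = θ (i + e + 1)})

/-! Call `i` a jump of `θ` when `θ i ≠ θ (i + 1)`. Two jumps at distance `0 < d` enclose a
maximal constant block of length at most `d`, so distinct jumps are at least `L = cycMinSeg n θ`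
apart. Writing `θ i - θ (i + k)` as the telescoping sum of the increments over `[i, i + k)`,
a window of length `k ≤ L` thus carries at most one nonzero increment, so the square of the sum
is the sum of the squares; summing over a period gives `k · W(θ)`. Likewise for `2 k ≤ L` the
windows `[i, i + k)` and `[i + k, i + 2k)` cannot both contain a jump. -/

theorem Function.Periodic.sum_range_add_one {M : Type*} [AddCommMonoid M] {g : ℤ → M} {n : ℕ}
    (hg : Periodic g n) : ∑ i ∈ range n, g (i + 1) = ∑ i ∈ range n, g i := by
  cases n with
  | zero => simp
  | succ m =>
    rw [sum_range_succ, sum_range_succ' (fun i : ℕ => g i)]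
    push_cast
    rw [← zero_add ((m : ℤ) + 1), ← Nat.cast_succ, hg]

theorem Function.Periodic.sum_range_add {M : Type*} [AddCommMonoid M] {g : ℤ → M} {n : ℕ}
    (hg : Periodic g n) (c : ℕ) : ∑ i ∈ range n, g (i + c) = ∑ i ∈ range n, g i := by
  induction c with
  | zero => simp
  | succ c ih =>
    rw [← ih, ← (hg.add_const (c : ℤ)).sum_range_add_one]
    push_cast
    simp only [add_right_comm _ (1 : ℤ), add_assoc]

theorem sub_eq_sum_range_sub_succ {G : Type*} [AddCommGroup G] (θ : ℤ → G) (i : ℤ) (k : ℕ) :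
    θ i - θ (i + k) = ∑ e ∈ range k, (θ (i + e) - θ (i + e + 1)) := by
  simpa [add_assoc] using (sum_range_sub' (fun e : ℕ => θ (i + e)) k).symm

theorem sq_sum_eq_sum_sq_of_mul_eq_zero {ι R : Type*} [CommSemiring R] (s : Finset ι) (x : ι → R)
    (h : ∀ a ∈ s, ∀ b ∈ s, a ≠ b → x a * x b = 0) :
    (∑ a ∈ s, x a) ^ 2 = ∑ a ∈ s, x a ^ 2 := by
  rw [sq, sum_mul_sum]
  refine sum_congr rfl fun a ha => ?_
  rw [sum_eq_single a (fun b hb hba => h a ha b hb hba.symm) (absurd ha), sq]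

theorem cycMinSeg_le_of_ne_of_ne {n d : ℕ} {θ : ℤ → ℝ} {a : ℤ} (hd : 0 < d) (ha : θ a ≠ θ (a + 1))
    (hb : θ (a + d) ≠ θ (a + d + 1)) : cycMinSeg n θ ≤ d := by
  classical
  have hjump : ∃ m : ℕ, 0 < m ∧ θ (a + m) ≠ θ (a + m + 1) := ⟨d, hd, hb⟩
  obtain ⟨hm0, hm⟩ := Nat.find_spec hjump
  refine (Nat.sInf_le (Or.inr ⟨hm0, a, ha, hm, fun e he hem => ?_⟩)).trans
    (Nat.find_min' hjump ⟨hd, hb⟩)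
  by_contra hne
  exact Nat.find_min hjump hem ⟨he, hne⟩

theorem jump_mul_jump_eq_zero {n : ℕ} {θ : ℤ → ℝ} (i : ℤ) {a b : ℕ} (hab : a < b)
    (hba : b - a < cycMinSeg n θ) :
    (θ (i + a) - θ (i + a + 1)) * (θ (i + b) - θ (i + b + 1)) = 0 := by
  by_contra h
  obtain ⟨ha, hb⟩ := mul_ne_zero_iff.mp h
  have hb' : θ (i + a + (b - a : ℕ)) ≠ θ (i + a + (b - a : ℕ) + 1) := by
    rwa [Nat.cast_sub hab.le, add_add_sub_cancel, ← sub_ne_zero]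
  exact (cycMinSeg_le_of_ne_of_ne (Nat.sub_pos_of_lt hab) (sub_ne_zero.mp ha) hb').not_gt hba

theorem sq_sub_eq_sum_sq_of_le_cycMinSeg {n k : ℕ} {θ : ℤ → ℝ} (hk : k ≤ cycMinSeg n θ) (i : ℤ) :
    (θ i - θ (i + k)) ^ 2 = ∑ e ∈ range k, (θ (i + e) - θ (i + e + 1)) ^ 2 := by
  rw [sub_eq_sum_range_sub_succ]
  refine sq_sum_eq_sum_sq_of_mul_eq_zero _ _ fun a ha b hb hab => ?_
  have hb := mem_range.mp hb
  have ha := mem_range.mp ha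
  rcases hab.lt_or_gt with h | h
  · exact jump_mul_jump_eq_zero (n := n) i h (by omega)
  · exact (mul_comm _ _).trans (jump_mul_jump_eq_zero (n := n) i h (by omega))

theorem sub_mul_sub_eq_zero_of_two_mul_le_cycMinSeg {n k : ℕ} {θ : ℤ → ℝ}
    (hk : 2 * k ≤ cycMinSeg n θ) (i : ℤ) :
    (θ i - θ (i + k)) * (θ (i + k) - θ (i + 2 * k)) = 0 := by
  rw [two_mul, ← add_assoc, sub_eq_sum_range_sub_succ, sub_eq_sum_range_sub_succ, sum_mul_sum]
  refine sum_eq_zero fun a ha => sum_eq_zero fun b hb => ?_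
  have hb := mem_range.mp hb
  have ha := mem_range.mp ha
  simpa only [Nat.cast_add, add_assoc] using
    jump_mul_jump_eq_zero (n := n) (θ := θ) i (b := k + b) (by omega) (by omega)

theorem seg_product_zero_and_total_variation_general
    (n : ℕ)
    (θ : ℤ → ℝ) (hθper : ∀ i : ℤ, θ (i + n) = θ i) :
    (∀ k : ℕ, 1 ≤ k → 2 * k ≤ cycMinSeg n θ → ∀ i : ℤ,
      (θ i - θ (i + k)) * (θ (i + k) - θ (i + 2 * k)) = 0) ∧
    (∀ k : ℕ, 1 ≤ k → k ≤ cycMinSeg n θ →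
      ∑ i ∈ Finset.range n, (θ (i + 1) - θ (i + 1 + k)) ^ 2
        = k * ∑ i ∈ Finset.range n, (θ (i + 1) - θ (i + 2)) ^ 2) := by
  refine ⟨fun k _ hk => sub_mul_sub_eq_zero_of_two_mul_le_cycMinSeg hk, fun k _ hk => ?_⟩
  set g : ℤ → ℝ := fun j => (θ j - θ (j + 1)) ^ 2
  have hg : Function.Periodic g n := fun j => by
    simp only [g, add_right_comm j (n : ℤ), hθper]
  have hshift (e : ℕ) : ∑ i ∈ range n, g (i + 1 + e) = ∑ i ∈ range n, g (i + 1) := by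
    rw [← (hg.add_const 1).sum_range_add e]
    simp only [add_right_comm _ (1 : ℤ) (e : ℤ)]
  calc ∑ i ∈ range n, (θ (i + 1) - θ (i + 1 + k)) ^ 2
      = ∑ i ∈ range n, ∑ e ∈ range k, g (i + 1 + e) :=
        sum_congr rfl fun i _ => sq_sub_eq_sum_sq_of_le_cycMinSeg hk _
    _ = k * ∑ i ∈ range n, g (i + 1) := by
        rw [sum_comm, sum_congr rfl fun e _ => hshift e, sum_const, card_range, nsmul_eq_mul]
    _ = k * ∑ i ∈ range n, (θ (i + 1) - θ (i + 2)) ^ 2 := by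
        simp only [g, add_assoc, one_add_one_eq_two]

theorem seg_product_zero_and_total_variation
    (n : ℕ) (hn : 2 ≤ n)
    (θ : ℤ → ℝ) (hθper : ∀ i : ℤ, θ (i + n) = θ i) :
    (∀ k : ℕ, 1 ≤ k → 2 * k ≤ cycMinSeg n θ → ∀ i : ℤ,
      (θ i - θ (i + k)) * (θ (i + k) - θ (i + 2 * k)) = 0) ∧
    (∀ k : ℕ, 1 ≤ k → k ≤ cycMinSeg n θ →
      ∑ i ∈ Finset.range n, (θ (i + 1) - θ (i + 1 + k)) ^ 2
        = k * ∑ i ∈ Finset.range n, (θ (i + 1) - θ (i + 2)) ^ 2) :=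
  seg_product_zero_and_total_variation_general n θ hθper
end

section
/- Let L ≥ 2 be an integer, n ≥ 2L + 2, and let A = (a_{ij}) be a real symmetric n×n matrix. Then θ^⊤Aθ = 0 for every θ ∈ Θ_L if and only if Σ_{i∈Λ} Σ_{j∈Λ} a_{ij} = 0 for every set Λ ⊆ {1, …, n} of cyclically consecutive indices whose cardinality |Λ| satisfies either L ≤ |Λ| ≤ n − L or |Λ| = n. Consequently, a quadratic estimator X ↦ X^⊤AX satisfies tr(A) = 1 and θ^⊤Aθ = 0 for all θ ∈ Θ_L (i.e., is unbiased for σ² over Θ_L) if and only if tr(A) = 1 and all such submatrix sums vanish. -/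
open Matrix Finset

lemma cycMinSeg_le (n : ℕ) (θ : ℤ → ℝ) : cycMinSeg n θ ≤ n :=
  Nat.sInf_le (Set.mem_union_left _ rfl)

lemma gap_lemma {n L : ℕ} {θ : ℤ → ℝ} (hL : L ≤ cycMinSeg n θ) (i : ℤ) (d : ℕ) (hd : 0 < d)
    (h1 : θ i ≠ θ (i + 1)) (h2 : θ (i + d) ≠ θ (i + d + 1)) : L ≤ d := by
  classical
  have hex : ∃ e : ℕ, 0 < e ∧ θ (i + e) ≠ θ (i + e + 1) := ⟨d, hd, h2⟩
  set e := Nat.find hex with he_def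
  obtain ⟨he0, hech⟩ := Nat.find_spec hex
  have hmem : e ∈ ({n} ∪ {d : ℕ | 0 < d ∧ ∃ i : ℤ,
      θ i ≠ θ (i + 1) ∧ θ (i + d) ≠ θ (i + d + 1) ∧
      ∀ e : ℕ, 0 < e → e < d → θ (i + e) = θ (i + e + 1)} : Set ℕ) := by
    refine Set.mem_union_right _ ⟨he0, i, h1, hech, fun e' he'0 he'e => ?_⟩
    have := Nat.find_min hex he'e
    push_neg at this
    exact this he'0
  have h3 : cycMinSeg n θ ≤ e := Nat.sInf_le hmem
  have h4 : e ≤ d := Nat.find_min' hex ⟨hd, h2⟩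
  omega

noncomputable def indTheta (n : ℕ) (a : ZMod n) (m : ℕ) : ZMod n → ℝ :=
  fun x => if (x - a).val < m then 1 else 0

lemma zmod_sum_shift (n : ℕ) [NeZero n] (f : ZMod n → ℝ) (C : ZMod n) :
    ∑ x : ZMod n, f x = ∑ i ∈ Finset.range n, f (C + (i : ZMod n)) := by
  refine Finset.sum_nbij' (i := fun x => (x - C).val) (j := fun i => C + (i : ZMod n)) ?_ ?_ ?_ ?_ ?_
  all_goals intro x hx
  · exact mem_range.mpr (ZMod.val_lt _)
  · exact mem_univ _
  · simp [ZMod.natCast_val, ZMod.cast_id]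
  · simp only [mem_range] at hx
    simp [ZMod.val_natCast, Nat.mod_eq_of_lt hx]
  · simp [ZMod.natCast_val, ZMod.cast_id]

lemma cut_sum {n m : ℕ} (hm : m ≤ n) (g : ℕ → ℝ) :
    ∑ i ∈ range n, (if i < m then (1:ℝ) else 0) * g i = ∑ i ∈ range m, g i := by
  rw [← Finset.sum_filter_of_ne (s := range n) (f := fun i => (if i < m then (1:ℝ) else 0) * g i)
    (p := fun i => i < m)]
  · have : filter (fun i => i < m) (range n) = range m := by
      ext x; simp only [mem_filter, mem_range]; omega
    rw [this]
    exact Finset.sum_congr rfl fun i hi => by rw [if_pos (mem_range.mp hi), one_mul]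
  · intro i _ h
    by_contra h'
    exact h' (by by_contra h''; simp [if_neg h''] at h)

lemma ind_quad (n : ℕ) [NeZero n] (A : Matrix (ZMod n) (ZMod n) ℝ) (a : ZMod n) (m : ℕ)
    (hm : m ≤ n) :
    (indTheta n a m) ⬝ᵥ A.mulVec (indTheta n a m)
      = ∑ s ∈ range m, ∑ t ∈ range m, A (a + (s : ZMod n)) (a + (t : ZMod n)) := by
  have hind : ∀ i : ℕ, i < n → indTheta n a m (a + (i : ZMod n)) = if i < m then 1 else 0 := by
    intro i hi
    unfold indTheta
    rw [add_sub_cancel_left, ZMod.val_natCast, Nat.mod_eq_of_lt hi]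
  have h0 : (indTheta n a m) ⬝ᵥ A.mulVec (indTheta n a m)
      = ∑ x : ZMod n, indTheta n a m x * ∑ y : ZMod n, A x y * indTheta n a m y := by
    simp [Matrix.mulVec, dotProduct]
  rw [h0, zmod_sum_shift n _ a]
  have h1 : ∀ i ∈ range n,
      indTheta n a m (a + (i:ZMod n)) * (∑ y : ZMod n, A (a + (i:ZMod n)) y * indTheta n a m y)
      = (if i < m then (1:ℝ) else 0) *
        ∑ j ∈ range n, (if j < m then (1:ℝ) else 0) * A (a + (i:ZMod n)) (a + (j:ZMod n)) := by
    intro i hi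
    rw [hind i (mem_range.mp hi), zmod_sum_shift n _ a]
    congr 1
    exact Finset.sum_congr rfl fun j hj => by
      rw [hind j (mem_range.mp hj)]; ring
  rw [Finset.sum_congr rfl h1, cut_sum hm]
  exact Finset.sum_congr rfl fun i _ => cut_sum hm _

lemma ind_change {n : ℕ} [NeZero n] (hn1 : 1 < n) {a x : ZMod n} {m : ℕ}
    (h : indTheta n a m x ≠ indTheta n a m (x + 1)) :
    (x - a).val = m - 1 ∨ (x - a).val = n - 1 := by
  set u := (x - a).val with hu_def
  have hun : u < n := ZMod.val_lt _
  rcases eq_or_lt_of_le (Nat.succ_le_of_lt hun) with h' | h'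
  · right; omega
  · -- u + 1 < n
    have hu' : (x + 1 - a).val = u + 1 := by
      have : x + 1 - a = (x - a) + 1 := by ring
      rw [this, ZMod.val_add, ZMod.val_one_eq_one_mod, Nat.mod_eq_of_lt hn1, ← hu_def, Nat.mod_eq_of_lt (by omega)]
    unfold indTheta at h
    rw [hu', ← hu_def] at h
    by_cases h1 : u < m <;> by_cases h2 : u + 1 < m <;> simp [h1, h2] at h ⊢ <;> omega

lemma ind_cycMinSeg (n L : ℕ) [NeZero n] (hL2 : 2 ≤ L) (hLn : 2 * L ≤ n) (a : ZMod n) (m : ℕ)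
    (hm : (L ≤ m ∧ m + L ≤ n) ∨ m = n) :
    L ≤ cycMinSeg n (fun i : ℤ => indTheta n a m ((i : ZMod n))) := by
  have hn1 : 1 < n := by omega
  unfold cycMinSeg
  apply le_csInf
  · exact ⟨n, Set.mem_union_left _ rfl⟩
  rintro d (hd | ⟨hd0, i, h1, h2, -⟩)
  · rw [Set.mem_singleton_iff] at hd; omega
  · set x : ZMod n := (i : ZMod n) with hx
    have hc1 : indTheta n a m x ≠ indTheta n a m (x + 1) := by
      have e1 : ((i + 1 : ℤ) : ZMod n) = x + 1 := by push_cast; rfl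
      simpa [e1] using h1
    have hc2 : indTheta n a m (x + (d : ZMod n)) ≠ indTheta n a m (x + (d : ZMod n) + 1) := by
      have e1 : ((i + (d : ℕ) : ℤ) : ZMod n) = x + (d : ZMod n) := by push_cast; rfl
      have e2 : ((i + (d : ℕ) + 1 : ℤ) : ZMod n) = x + (d : ZMod n) + 1 := by push_cast; rfl
      simpa [e1, e2] using h2
    have hu := ind_change hn1 hc1
    have hu2 := ind_change hn1 hc2
    set u := (x - a).val with hu_def
    have hval : (x + (d : ZMod n) - a).val = (u + d % n) % n := by
      have e : x + (d : ZMod n) - a = (x - a) + (d : ZMod n) := by ring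
      rw [e, ZMod.val_add, ZMod.val_natCast, ← hu_def]
    rw [hval, Nat.add_mod_mod] at hu2
    have hun : u < n := ZMod.val_lt _
    set k := d % n with hk_def
    have hk : k < n := Nat.mod_lt _ (by omega)
    have hkd : k ≤ d := Nat.mod_le _ _
    have hdn : k = 0 → n ≤ d := fun h =>
      Nat.le_of_dvd hd0 (Nat.dvd_of_mod_eq_zero (by omega))
    have hcase : u + k = (u + k) % n ∨ u + k = (u + k) % n + n := by
      rcases Nat.lt_or_ge (u + k) n with h | h
      · left; rw [Nat.mod_eq_of_lt h]
      · right; rw [Nat.mod_eq_sub_mod h, Nat.mod_eq_of_lt (by omega)]; omega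
    rw [← Nat.add_mod_mod, ← hk_def] at hu2
    clear_value u k
    clear hval hu_def hk_def hx hc1 hc2
    rcases hu with hu|hu <;> rcases hu2 with h2'|h2' <;> rcases hcase with hc|hc <;> omega

lemma sum_expand (n : ℕ) (B : ℕ → ℕ → ℝ) (φ δ : ℕ → ℝ)
    (hφ : ∀ i, i < n → φ i = ∑ p ∈ range (i + 1), δ p) :
    ∑ i ∈ range n, ∑ j ∈ range n, φ i * (B i j * φ j)
      = ∑ p ∈ range n, ∑ q ∈ range n,
          δ p * δ q * (∑ i ∈ Ico p n, ∑ j ∈ Ico q n, B i j) := by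
  have hfil : ∀ (p : ℕ) (g : ℕ → ℝ),
      ∑ i ∈ range n, (if p ≤ i then g i else 0) = ∑ i ∈ Ico p n, g i := by
    intro p g
    rw [← Finset.sum_filter]
    congr 1
    ext x
    simp only [mem_filter, mem_range, mem_Ico]
    tauto
  have hφ' : ∀ i, i < n → φ i = ∑ p ∈ range n, (if p ≤ i then δ p else 0) := by
    intro i hi
    rw [hφ i hi, ← Finset.sum_filter]
    congr 1; ext x; simp only [mem_filter, mem_range]; omega
  calc ∑ i ∈ range n, ∑ j ∈ range n, φ i * (B i j * φ j)
      = ∑ i ∈ range n, ∑ j ∈ range n, ∑ p ∈ range n, ∑ q ∈ range n,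
          (if p ≤ i then δ p else 0) * ((if q ≤ j then δ q else 0) * B i j) := by
        refine sum_congr rfl fun i hi => sum_congr rfl fun j hj => ?_
        rw [hφ' i (mem_range.mp hi), hφ' j (mem_range.mp hj), Finset.sum_mul]
        refine sum_congr rfl fun p _ => ?_
        rw [Finset.mul_sum, Finset.mul_sum]
        exact sum_congr rfl fun q _ => by ring
    _ = ∑ i ∈ range n, ∑ p ∈ range n, ∑ j ∈ range n, ∑ q ∈ range n,
          (if p ≤ i then δ p else 0) * ((if q ≤ j then δ q else 0) * B i j) := by
        exact sum_congr rfl fun i _ => Finset.sum_comm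
    _ = ∑ p ∈ range n, ∑ i ∈ range n, ∑ j ∈ range n, ∑ q ∈ range n,
          (if p ≤ i then δ p else 0) * ((if q ≤ j then δ q else 0) * B i j) := Finset.sum_comm
    _ = ∑ p ∈ range n, ∑ i ∈ range n, ∑ q ∈ range n, ∑ j ∈ range n,
          (if p ≤ i then δ p else 0) * ((if q ≤ j then δ q else 0) * B i j) := by
        exact sum_congr rfl fun p _ => sum_congr rfl fun i _ => Finset.sum_comm
    _ = ∑ p ∈ range n, ∑ q ∈ range n, ∑ i ∈ range n, ∑ j ∈ range n,
          (if p ≤ i then δ p else 0) * ((if q ≤ j then δ q else 0) * B i j) := by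
        exact sum_congr rfl fun p _ => Finset.sum_comm
    _ = ∑ p ∈ range n, ∑ q ∈ range n,
          δ p * δ q * (∑ i ∈ Ico p n, ∑ j ∈ Ico q n, B i j) := by
        refine sum_congr rfl fun p _ => sum_congr rfl fun q _ => ?_
        rw [Finset.mul_sum, ← hfil p (fun i => δ p * δ q * ∑ j ∈ Ico q n, B i j)]
        refine sum_congr rfl fun i _ => ?_
        rw [Finset.mul_sum, ← hfil q (fun j => δ p * δ q * B i j)]
        split_ifs with hp
        · refine sum_congr rfl fun j _ => ?_
          by_cases hq : q ≤ j <;> simp [hq] <;> ring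
        · refine Finset.sum_eq_zero fun j _ => ?_
          ring

lemma quad_zero (n L : ℕ) [NeZero n] (hL2 : 2 ≤ L) (hn : 2 * L + 2 ≤ n)
    (A : Matrix (ZMod n) (ZMod n) ℝ) (hA : A.IsSymm)
    (hsum : ∀ (a : ZMod n) (m : ℕ), ((L ≤ m ∧ m ≤ n - L) ∨ m = n) →
        ∑ s ∈ Finset.range m, ∑ t ∈ Finset.range m,
          A (a + (s : ZMod n)) (a + (t : ZMod n)) = 0)
    (θ : ZMod n → ℝ) (hθ : L ≤ cycMinSeg n (fun i : ℤ => θ ((i : ZMod n)))) :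
    θ ⬝ᵥ A.mulVec θ = 0 := by
  classical
  set θ' : ℤ → ℝ := fun i => θ ((i : ZMod n)) with hθ'def
  have hper : ∀ j : ℤ, θ' (j + n) = θ' j := by
    intro j
    show θ (((j + (n:ℤ)) : ℤ) : ZMod n) = θ ((j : ZMod n))
    congr 1
    push_cast
    simp
  obtain ⟨c, hc⟩ : ∃ c : ℤ, ∀ j : ℤ, θ' j ≠ θ' (j + 1) → θ' c ≠ θ' (c + 1) := by
    by_cases hex : ∃ j : ℤ, θ' j ≠ θ' (j + 1)
    · exact ⟨hex.choose, fun _ _ => hex.choose_spec⟩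
    · push_neg at hex
      exact ⟨0, fun j h => absurd (hex j) h⟩
  set φ : ℕ → ℝ := fun s => θ' (c + 1 + s) with hφdef
  set δ : ℕ → ℝ := fun p => if p = 0 then φ 0 else φ p - φ (p - 1) with hδdef
  set B : ℕ → ℕ → ℝ :=
    fun s t => A (((c + 1 + s : ℤ) : ZMod n)) (((c + 1 + t : ℤ) : ZMod n)) with hBdef
  -- change points
  have hch : ∀ p : ℕ, 0 < p → δ p ≠ 0 → θ' (c + p) ≠ θ' (c + p + 1) := by
    intro p hp0 hδp
    have hδp' : φ p - φ (p - 1) ≠ 0 := by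
      intro h
      apply hδp
      show (if p = 0 then φ 0 else φ p - φ (p - 1)) = 0
      rw [if_neg (by omega : ¬ p = 0)]
      exact h
    have e1 : φ (p - 1) = θ' (c + p) := by
      show θ' (c + 1 + ((p - 1 : ℕ) : ℤ)) = θ' (c + p)
      congr 1
      omega
    have e2 : φ p = θ' (c + p + 1) := by
      show θ' (c + 1 + (p : ℤ)) = θ' (c + p + 1)
      congr 1
      ring
    intro heq
    rw [e1, e2] at hδp'
    rw [heq] at hδp'
    simp at hδp'
  -- numeric bounds for change points
  have hkey : ∀ p : ℕ, 0 < p → p < n → δ p ≠ 0 → L ≤ p ∧ p + L ≤ n := by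
    intro p hp0 hpn hδp
    have hchp := hch p hp0 hδp
    have hcne : θ' c ≠ θ' (c + 1) := hc _ hchp
    constructor
    · exact gap_lemma hθ c p hp0 hcne hchp
    · have h2 : θ' (c + p + ((n - p : ℕ) : ℤ)) ≠ θ' (c + p + ((n - p : ℕ) : ℤ) + 1) := by
        have e1 : c + p + ((n - p : ℕ) : ℤ) = c + n := by omega
        have e2 : c + (n:ℤ) = c + 1 + n - 1 := by ring
        rw [e1]
        have r1 : θ' (c + n) = θ' c := by
          have := hper c; rwa [show c + (n:ℤ) = c + n from rfl] at this
        have r2 : θ' (c + n + 1) = θ' (c + 1) := by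
          have := hper (c + 1)
          rwa [show c + 1 + (n:ℤ) = c + n + 1 by ring] at this
        rw [r1, r2]
        exact hcne
      have := gap_lemma hθ (c + p) (n - p) (by omega) hchp h2
      omega
  have hgap2 : ∀ p q : ℕ, 0 < p → p < q → q < n → δ p ≠ 0 → δ q ≠ 0 → L ≤ q - p := by
    intro p q hp0 hpq hqn hδp hδq
    have h1 := hch p hp0 hδp
    have h2 := hch q (by omega) hδq
    have h2' : θ' (c + p + ((q - p : ℕ) : ℤ)) ≠ θ' (c + p + ((q - p : ℕ) : ℤ) + 1) := by
      have e1 : c + p + ((q - p : ℕ) : ℤ) = c + q := by omega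
      rw [e1]; exact h2
    exact gap_lemma hθ (c + p) (q - p) (by omega) h1 h2'
  -- square block sums vanish
  have hS0 : ∀ u v : ℕ, v ≤ n → ((L ≤ v - u ∧ (v - u) + L ≤ n) ∨ v - u = n) →
      ∑ i ∈ Ico u v, ∑ j ∈ Ico u v, B i j = 0 := by
    intro u v hvn hcond
    have key : ∑ i ∈ Ico u v, ∑ j ∈ Ico u v, B i j
        = ∑ s ∈ range (v - u), ∑ t ∈ range (v - u),
            A ((((c + 1 + u : ℤ)) : ZMod n) + (s : ZMod n))
              ((((c + 1 + u : ℤ)) : ZMod n) + (t : ZMod n)) := by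
      rw [Finset.sum_Ico_eq_sum_range]
      refine sum_congr rfl fun s _ => ?_
      rw [Finset.sum_Ico_eq_sum_range]
      refine sum_congr rfl fun t _ => ?_
      show A _ _ = A _ _
      have e1 : ((c + 1 + (u + s : ℕ) : ℤ) : ZMod n)
          = (((c + 1 + u : ℤ)) : ZMod n) + ((s : ℕ) : ZMod n) := by
        push_cast; ring
      have e2 : ((c + 1 + (u + t : ℕ) : ℤ) : ZMod n)
          = (((c + 1 + u : ℤ)) : ZMod n) + ((t : ℕ) : ZMod n) := by
        push_cast; ring
      rw [e1, e2]
    rw [key]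
    refine hsum _ (v - u) ?_
    rcases hcond with ⟨h1, h2⟩ | h
    · exact Or.inl ⟨h1, by omega⟩
    · exact Or.inr h
  -- T vanishing
  have hT0 : ∀ p q : ℕ, p ≤ q → q < n → δ p ≠ 0 → δ q ≠ 0 →
      ∑ i ∈ Ico p n, ∑ j ∈ Ico q n, B i j = 0 := by
    intro p q hpq hqn hδp hδq
    have hSpn : ∑ i ∈ Ico p n, ∑ j ∈ Ico p n, B i j = 0 := by
      by_cases hp0 : p = 0
      · exact hS0 p n le_rfl (Or.inr (by omega))
      · have := hkey p (by omega) (by omega) hδp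
        exact hS0 p n le_rfl (Or.inl ⟨by omega, by omega⟩)
    have hSqn : ∑ i ∈ Ico q n, ∑ j ∈ Ico q n, B i j = 0 := by
      by_cases hq0 : q = 0
      · exact hS0 q n le_rfl (Or.inr (by omega))
      · have := hkey q (by omega) hqn hδq
        exact hS0 q n le_rfl (Or.inl ⟨by omega, by omega⟩)
    have hSpq : ∑ i ∈ Ico p q, ∑ j ∈ Ico p q, B i j = 0 := by
      rcases eq_or_lt_of_le hpq with rfl | hlt
      · simp
      · have hqk := hkey q (by omega) hqn hδq
        by_cases hp0 : p = 0
        · subst hp0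
          exact hS0 0 q (by omega) (Or.inl ⟨by omega, by omega⟩)
        · have hgpq := hgap2 p q (by omega) hlt hqn hδp hδq
          exact hS0 p q (by omega) (Or.inl ⟨by omega, by omega⟩)
    -- splitting
    have hBsymm : ∀ s t, B s t = B t s := by
      intro s t
      exact (hA.apply _ _).symm
    have hsplit_inner : ∀ (s : Finset ℕ), ∑ i ∈ s, ∑ j ∈ Ico p n, B i j
        = (∑ i ∈ s, ∑ j ∈ Ico p q, B i j) + ∑ i ∈ s, ∑ j ∈ Ico q n, B i j := by
      intro s
      rw [← Finset.sum_add_distrib]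
      exact sum_congr rfl fun i _ => (Finset.sum_Ico_consecutive _ hpq hqn.le).symm
    have hR : ∑ i ∈ Ico q n, ∑ j ∈ Ico p q, B i j = ∑ i ∈ Ico p q, ∑ j ∈ Ico q n, B i j := by
      rw [Finset.sum_comm]
      exact sum_congr rfl fun i _ => sum_congr rfl fun j _ => hBsymm _ _
    have hexp : (0:ℝ) = ((∑ i ∈ Ico p q, ∑ j ∈ Ico p q, B i j)
          + ∑ i ∈ Ico p q, ∑ j ∈ Ico q n, B i j)
        + ((∑ i ∈ Ico q n, ∑ j ∈ Ico p q, B i j) + ∑ i ∈ Ico q n, ∑ j ∈ Ico q n, B i j) := by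
      rw [← hsplit_inner, ← hsplit_inner,
        Finset.sum_Ico_consecutive (fun i => ∑ j ∈ Ico p n, B i j) hpq hqn.le, hSpn]
    have hTsplit : ∑ i ∈ Ico p n, ∑ j ∈ Ico q n, B i j
        = (∑ i ∈ Ico p q, ∑ j ∈ Ico q n, B i j) + ∑ i ∈ Ico q n, ∑ j ∈ Ico q n, B i j :=
      (Finset.sum_Ico_consecutive (fun i => ∑ j ∈ Ico q n, B i j) hpq hqn.le).symm
    rw [hSpq, hSqn] at hexp
    rw [hTsplit, hSqn]
    rw [hR] at hexp
    linarith
  -- telescoping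
  have htel : ∀ i : ℕ, φ i = ∑ p ∈ range (i + 1), δ p := by
    intro i
    induction i with
    | zero => simp [hδdef]
    | succ i ih =>
      rw [Finset.sum_range_succ, ← ih, hδdef]
      simp only [Nat.succ_ne_zero, if_false, Nat.add_sub_cancel]
      ring
  -- main computation
  have hmain : θ ⬝ᵥ A.mulVec θ = ∑ i ∈ range n, ∑ j ∈ range n, φ i * (B i j * φ j) := by
    have h0 : θ ⬝ᵥ A.mulVec θ = ∑ x : ZMod n, θ x * ∑ y : ZMod n, A x y * θ y := by
      simp [Matrix.mulVec, dotProduct]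
    rw [h0, zmod_sum_shift n _ (((c + 1 : ℤ)) : ZMod n)]
    refine sum_congr rfl fun i _ => ?_
    rw [zmod_sum_shift n _ (((c + 1 : ℤ)) : ZMod n)]
    have eθ : ∀ s : ℕ, θ ((((c + 1 : ℤ)) : ZMod n) + (s : ZMod n)) = φ s := by
      intro s
      show _ = θ (((c + 1 + (s:ℕ) : ℤ)) : ZMod n)
      congr 1
      push_cast
      ring
    rw [eθ i, Finset.mul_sum]
    refine sum_congr rfl fun j _ => ?_
    rw [eθ j]
    have eB : A ((((c + 1 : ℤ)) : ZMod n) + (i : ZMod n)) ((((c + 1 : ℤ)) : ZMod n) + (j : ZMod n))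
        = B i j := by
      show A _ _ = A _ _
      congr 1 <;> · push_cast; ring
    rw [eB]
  rw [hmain, sum_expand n B φ δ (fun i _ => htel i)]
  refine Finset.sum_eq_zero fun p hp => Finset.sum_eq_zero fun q hq => ?_
  by_cases hδp : δ p = 0
  · rw [hδp]; ring
  by_cases hδq : δ q = 0
  · rw [hδq]; ring
  rcases le_or_gt p q with h | h
  · rw [hT0 p q h (mem_range.mp hq) hδp hδq]; ring
  · have hsymmT : ∑ i ∈ Ico p n, ∑ j ∈ Ico q n, B i j
        = ∑ i ∈ Ico q n, ∑ j ∈ Ico p n, B i j := by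
      rw [Finset.sum_comm]
      refine sum_congr rfl fun i _ => sum_congr rfl fun j _ => (hA.apply _ _).symm
    rw [hsymmT, hT0 q p h.le (mem_range.mp hp) hδq hδp]
    ring


theorem unbiased_iff_cyclic_submatrix_sums_vanish
    (n L : ℕ) [NeZero n] (hL : 2 ≤ L) (hn : 2 * L + 2 ≤ n)
    (A : Matrix (ZMod n) (ZMod n) ℝ) (hA : A.IsSymm) :
    ((∀ θ : ZMod n → ℝ, L ≤ cycMinSeg n (fun i : ℤ => θ (i : ZMod n)) →
        θ ⬝ᵥ A.mulVec θ = 0)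
      ↔ (∀ (a : ZMod n) (m : ℕ), ((L ≤ m ∧ m ≤ n - L) ∨ m = n) →
          ∑ s ∈ Finset.range m, ∑ t ∈ Finset.range m,
            A (a + (s : ZMod n)) (a + (t : ZMod n)) = 0)) ∧
    ((A.trace = 1 ∧
        ∀ θ : ZMod n → ℝ, L ≤ cycMinSeg n (fun i : ℤ => θ (i : ZMod n)) →
          θ ⬝ᵥ A.mulVec θ = 0)
      ↔ (A.trace = 1 ∧
        ∀ (a : ZMod n) (m : ℕ), ((L ≤ m ∧ m ≤ n - L) ∨ m = n) →
          ∑ s ∈ Finset.range m, ∑ t ∈ Finset.range m,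
            A (a + (s : ZMod n)) (a + (t : ZMod n)) = 0)) := by
  have hiff : (∀ θ : ZMod n → ℝ, L ≤ cycMinSeg n (fun i : ℤ => θ (i : ZMod n)) →
        θ ⬝ᵥ A.mulVec θ = 0)
      ↔ (∀ (a : ZMod n) (m : ℕ), ((L ≤ m ∧ m ≤ n - L) ∨ m = n) →
          ∑ s ∈ Finset.range m, ∑ t ∈ Finset.range m,
            A (a + (s : ZMod n)) (a + (t : ZMod n)) = 0) := by
    constructor
    · intro h a m hm
      have hmn : m ≤ n := by
        rcases hm with ⟨h1, h2⟩ | rfl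
        · omega
        · rfl
      rw [← ind_quad n A a m hmn]
      apply h
      apply ind_cycMinSeg n L hL (by omega) a m
      rcases hm with ⟨h1, h2⟩ | h'
      · exact Or.inl ⟨h1, by omega⟩
      · exact Or.inr h'
    · intro h θ hθ
      exact quad_zero n L hL hn A hA h θ hθ
  exact ⟨hiff, ⟨fun ⟨t, h⟩ => ⟨t, hiff.mp h⟩, fun ⟨t, h⟩ => ⟨t, hiff.mpr h⟩⟩⟩
end

section
/- Let L ≥ 2 be an integer and n ≥ 2L + 2. A real symmetric n×n matrix A satisfies (a) C_k^⊤AC_k = A for all 0 ≤ k ≤ n−1 (A is circulant), (b) tr(A) = 1, and (c) θ^⊤Aθ = 0 for every θ ∈ Θ_L, if and only if A = Σ_{k=1}^L c_kA_k for some c ∈ ℝ^L with Σ_{k=1}^L c_k = 1 and Σ_{k=1}^L k·c_k = 0. Equivalently, the set of all equivariant unbiased quadratic variance estimators for the model class Θ_L is exactly Q_L = {Σ_{k=1}^L c_kY_k : c ∈ ℝ^L, Σ_{k=1}^L c_k = 1, Σ_{k=1}^L k·c_k = 0}, where Y_k = X^⊤A_kX. -/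
open Matrix Finset

/-- The circulant permutation matrix `C_k` whose `(i,j)` entry is `1` iff `j - i ≡ k (mod n)`. -/
def Cmat (n : ℕ) [NeZero n] (k : ZMod n) : Matrix (ZMod n) (ZMod n) ℝ :=
  fun i j => if j - i = k then 1 else 0

/-- `A_k = (1/n) (I - C_k/2 - C_kᵀ/2)`. -/
noncomputable def Amat (n : ℕ) [NeZero n] (k : ZMod n) : Matrix (ZMod n) (ZMod n) ℝ :=
  ((n : ℝ))⁻¹ • (1 - (2⁻¹ : ℝ) • Cmat n k - (2⁻¹ : ℝ) • (Cmat n k)ᵀ)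

/-!
Condition (a) says that `A` is circulant, `A i j = a (j - i)` with `a = A 0`; symmetry makes `a`
even and (b) gives `a 0 = 1 / n`. Since `θᵀ A_k θ = (2n)⁻¹ ∑ₓ (θ x - θ (x + k))²` and, for
`θ ∈ Θ_L` and `k ≤ L`, every window of length `k` contains at most one jump of `θ`, this sum is
`k` times the one for `k = 1`; so `∑ c_k A_k` is unbiased on `Θ_L` as soon as `∑ k c_k = 0`.

Conversely, the indicator of `{0, …, m - 1}` lies in `Θ_L` for `L ≤ m ≤ n - L`, and its quadratic
form is the Toeplitz sum `Q m = ∑_{p, q < m} a (q - p)`, with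
`Q (m + 1) - Q m = a 0 + 2 (a 1 + ⋯ + a m)`. Vanishing of `Q` on `[L, n - L]` thus forces
`a d = 0` for `L < d < n - L`, `a 0 + 2 ∑_{d ≤ L} a d = 0` and `∑_{d ≤ L} d a d = 0`, which is
`A = ∑ c_k A_k` with `c_k = -2n a k`.
-/

lemma sq_sum_eq_sum_sq_of_at_most_one_ne_zero {ι R : Type*} [CommSemiring R] {s : Finset ι}
    {f : ι → R} (h : ∀ i ∈ s, ∀ j ∈ s, f i ≠ 0 → f j ≠ 0 → i = j) :
    (∑ i ∈ s, f i) ^ 2 = ∑ i ∈ s, f i ^ 2 := by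
  by_cases hne : ∃ i ∈ s, f i ≠ 0
  · obtain ⟨i, hi, hfi⟩ := hne
    have hzero : ∀ j ∈ s, j ≠ i → f j = 0 := fun j hj hji =>
      not_not.1 fun hfj => hji (h j hj i hi hfj hfi)
    rw [sum_eq_single_of_mem i hi hzero,
      sum_eq_single_of_mem i hi fun j hj hji => by rw [hzero j hj hji, sq, zero_mul]]
  · push Not at hne
    rw [sum_eq_zero hne, sum_eq_zero fun i hi => by rw [hne i hi, sq, zero_mul], sq, zero_mul]

section Toeplitz

variable {G : Type*} [AddCommGroupWithOne G] (a : G → ℝ)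

def toeplitzSum (m : ℕ) : ℝ := ∑ p ∈ range m, ∑ q ∈ range m, a (q - p)

variable {a}

lemma toeplitzSum_succ (ha : ∀ t, a (-t) = a t) (m : ℕ) :
    toeplitzSum a (m + 1) = toeplitzSum a m + (a 0 + 2 * ∑ d ∈ range m, a (d + 1 : ℕ)) := by
  have hrefl : ∑ p ∈ range m, a (m - p) = ∑ d ∈ range m, a (d + 1 : ℕ) := by
    rw [← sum_range_reflect]
    refine sum_congr rfl fun d hd => congrArg a ?_
    rw [Nat.sub_sub, add_comm 1 d, Nat.cast_sub (by rw [mem_range] at hd; omega), sub_sub_cancel]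
  have hsymm : ∑ q ∈ range m, a (q - m) = ∑ p ∈ range m, a (m - p) :=
    sum_congr rfl fun q _ => by rw [← neg_sub, ha]
  simp only [toeplitzSum, sum_range_succ, sum_add_distrib, hsymm, hrefl, sub_self]
  ring

lemma toeplitzSum_eq (ha : ∀ t, a (-t) = a t) (m : ℕ) :
    toeplitzSum a m = m * (a 0 + 2 * ∑ d ∈ range m, a (d + 1 : ℕ))
      - 2 * ∑ d ∈ range m, ((d : ℝ) + 1) * a (d + 1 : ℕ) := by
  induction m with
  | zero => simp [toeplitzSum]
  | succ m ih =>
    rw [toeplitzSum_succ ha, ih, sum_range_succ, sum_range_succ]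
    push_cast
    ring

lemma sum_range_mul_eq_zero_of_toeplitzSum_eq_zero (ha : ∀ t, a (-t) = a t) {L : ℕ}
    (h₀ : toeplitzSum a L = 0) (h₁ : toeplitzSum a (L + 1) = 0) :
    ∑ d ∈ range L, ((d : ℝ) + 1) * a (d + 1 : ℕ) = 0 := by
  have hS := toeplitzSum_succ ha L
  rw [h₀, h₁, zero_add] at hS
  rw [toeplitzSum_eq ha, ← hS] at h₀
  linarith

lemma apply_eq_zero_of_toeplitzSum_eq_zero (ha : ∀ t, a (-t) = a t) {m : ℕ}
    (h₀ : toeplitzSum a m = 0) (h₁ : toeplitzSum a (m + 1) = 0) (h₂ : toeplitzSum a (m + 2) = 0) :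
    a (m + 1 : ℕ) = 0 := by
  have e₁ := toeplitzSum_succ ha m
  have e₂ := toeplitzSum_succ ha (m + 1)
  rw [sum_range_succ, h₁, h₂] at e₂
  rw [h₀, h₁] at e₁
  linarith

end Toeplitz

lemma cycMinSeg_le_of_ne_of_ne_s11 {n : ℕ} (θ : ℤ → ℝ) {i : ℤ} {e : ℕ} (he : 0 < e)
    (h₁ : θ i ≠ θ (i + 1)) (h₂ : θ (i + e) ≠ θ (i + e + 1)) : cycMinSeg n θ ≤ e := by
  classical
  have hex : ∃ d : ℕ, 0 < d ∧ θ (i + d) ≠ θ (i + d + 1) := ⟨e, he, h₂⟩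
  obtain ⟨hpos, hjump⟩ := Nat.find_spec hex
  calc cycMinSeg n θ ≤ Nat.find hex :=
        Nat.sInf_le <| Or.inr ⟨hpos, i, h₁, hjump, fun d hd hlt =>
          not_not.1 fun h => Nat.find_min hex hlt ⟨hd, h⟩⟩
    _ ≤ e := Nat.find_min' hex ⟨he, h₂⟩

def segmentIndicator (n m : ℕ) (x : ZMod n) : ℝ := if x.val < m then 1 else 0

variable {n : ℕ} [NeZero n]

lemma ZMod.sum_eq_sum_range {M : Type*} [AddCommMonoid M] (f : ZMod n → M) :
    ∑ x, f x = ∑ v ∈ range n, f v :=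
  sum_nbij' ZMod.val (↑) (fun x _ => mem_range.2 x.val_lt) (fun _ _ => mem_univ _)
    (fun x _ => ZMod.natCast_zmod_val x) (fun v hv => ZMod.val_cast_of_lt (mem_range.1 hv))
    (fun x _ => by rw [ZMod.natCast_zmod_val])

lemma ZMod.sum_ite_val_lt {M : Type*} [AddCommMonoid M] (f : ZMod n → M) {m : ℕ} (hm : m ≤ n) :
    ∑ x, (if x.val < m then f x else 0) = ∑ v ∈ range m, f v := by
  obtain ⟨r, hr⟩ := Nat.exists_eq_add_of_le hm
  have hval {v : ℕ} (hv : v < m + r) : (v : ZMod n).val = v := ZMod.val_cast_of_lt (by omega)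
  rw [ZMod.sum_eq_sum_range, show range n = range (m + r) by rw [hr], sum_range_add,
    sum_eq_zero (s := range r) fun v hv => by
      rw [hval (by rw [mem_range] at hv; omega), if_neg (by omega)],
    add_zero]
  exact sum_congr rfl fun v hv => by
    rw [hval (by rw [mem_range] at hv; omega), if_pos (mem_range.1 hv)]

lemma ZMod.sum_eq_add_sum_range_of_eq_zero {M : Type*} [AddCommMonoid M] (f : ZMod n → M)
    {L : ℕ} (hL : 2 * L < n) (hf : ∀ d : ℕ, L < d → d < n - L → f d = 0) :
    ∑ x, f x = f 0 + ∑ d ∈ range L, (f (d + 1 : ℕ) + f (-(d + 1 : ℕ))) := by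
  obtain ⟨r, hr⟩ := Nat.exists_eq_add_of_lt hL
  have hmid : ∑ v ∈ range r, f (L + 1 + v : ℕ) = 0 :=
    sum_eq_zero fun v hv => hf _ (by omega) (by rw [mem_range] at hv; omega)
  have hneg (d : ℕ) (hd : d ∈ range L) : f (L + 1 + r + (L - 1 - d) : ℕ) = f (-(d + 1 : ℕ)) := by
    congr 1
    rw [eq_neg_iff_add_eq_zero, ← Nat.cast_add, ZMod.natCast_eq_zero_iff]
    rw [mem_range] at hd
    exact ⟨1, by omega⟩
  -- split `range n` into `[0, L]`, the middle block where `f` vanishes, and `[n - L, n)`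
  rw [ZMod.sum_eq_sum_range, show range n = range (L + 1 + r + L) by rw [hr]; ring_nf,
    sum_range_add, sum_range_add, hmid, sum_range_succ',
    ← sum_range_reflect (fun v => f (L + 1 + r + v : ℕ)), sum_congr rfl hneg, sum_add_distrib, Nat.cast_zero, add_zero, add_comm _ (f 0), add_assoc]

lemma Cmat_apply_eq_zero_apply (k i j : ZMod n) : Cmat n k i j = Cmat n k 0 (j - i) := by
  simp [Cmat]

lemma Cmat_transpose_mul_mul_Cmat_apply (A : Matrix (ZMod n) (ZMod n) ℝ) (k i j : ZMod n) :
    ((Cmat n k)ᵀ * A * Cmat n k) i j = A (i - k) (j - k) := by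
  have hsub (a b : ZMod n) : ∀ l, (a - l = b ↔ l = a - b) := fun l => by
    constructor <;> rintro rfl <;> abel
  simp [Matrix.mul_apply, Cmat, hsub]

lemma Cmat_mulVec_apply (k : ZMod n) (θ : ZMod n → ℝ) (i : ZMod n) :
    (Cmat n k *ᵥ θ) i = θ (i + k) := by
  simp [mulVec, dotProduct, Cmat, sub_eq_iff_eq_add, add_comm]

lemma Cmat_zero : Cmat n 0 = 1 := by
  ext i j
  simp [Cmat, Matrix.one_apply, sub_eq_zero, eq_comm]

lemma Cmat_transpose (k : ZMod n) : (Cmat n k)ᵀ = Cmat n (-k) := by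
  ext i j
  simp only [Matrix.transpose_apply, Cmat, ← neg_sub i j, neg_inj]

lemma trace_Cmat (k : ZMod n) : (Cmat n k).trace = if k = 0 then (n : ℝ) else 0 := by
  simp [Matrix.trace, Cmat, eq_comm]

lemma conj_Cmat_eq_self_iff (A : Matrix (ZMod n) (ZMod n) ℝ) :
    (∀ k, (Cmat n k)ᵀ * A * Cmat n k = A) ↔ ∀ i j, A i j = A 0 (j - i) := by
  simp only [← Matrix.ext_iff, Cmat_transpose_mul_mul_Cmat_apply]
  refine ⟨fun h i j => by simpa using (h i i j).symm, fun h k i j => ?_⟩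
  rw [h, h i, sub_sub_sub_cancel_right]

lemma eq_sum_smul_Cmat {A : Matrix (ZMod n) (ZMod n) ℝ} (hA : ∀ i j, A i j = A 0 (j - i)) :
    A = ∑ t, A 0 t • Cmat n t := by
  ext i j
  simp [Matrix.sum_apply, Cmat, hA i j]

lemma Amat_eq (k : ZMod n) :
    Amat n k = (n : ℝ)⁻¹ • (Cmat n 0 - (2⁻¹ : ℝ) • Cmat n k - (2⁻¹ : ℝ) • Cmat n (-k)) := by
  rw [Amat, Cmat_zero, Cmat_transpose]

lemma Amat_isSymm (k : ZMod n) : (Amat n k).IsSymm := by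
  simp only [Matrix.IsSymm, Amat, Matrix.transpose_smul, Matrix.transpose_sub,
    Matrix.transpose_one, Matrix.transpose_transpose, sub_right_comm]

lemma trace_Amat {k : ZMod n} (hk : k ≠ 0) : (Amat n k).trace = 1 := by
  simp [Amat_eq, trace_Cmat, hk, NeZero.ne n]

lemma Cmat_transpose_mul_Cmat_mul_Cmat (c k : ZMod n) :
    (Cmat n c)ᵀ * Cmat n k * Cmat n c = Cmat n k :=
  (conj_Cmat_eq_self_iff _).2 (Cmat_apply_eq_zero_apply k) c

lemma Cmat_transpose_mul_Amat_mul_Cmat (c k : ZMod n) :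
    (Cmat n c)ᵀ * Amat n k * Cmat n c = Amat n k := by
  simp only [Amat_eq, Matrix.mul_sub, Matrix.sub_mul, Matrix.mul_smul, Matrix.smul_mul,
    Cmat_transpose_mul_Cmat_mul_Cmat]

lemma dotProduct_Cmat_mulVec (k : ZMod n) (θ : ZMod n → ℝ) :
    θ ⬝ᵥ Cmat n k *ᵥ θ = ∑ x, θ x * θ (x + k) := by
  simp only [dotProduct, Cmat_mulVec_apply]

lemma dotProduct_Amat_mulVec (k : ZMod n) (θ : ZMod n → ℝ) :
    θ ⬝ᵥ Amat n k *ᵥ θ = (2 * n : ℝ)⁻¹ * ∑ x, (θ x - θ (x + k)) ^ 2 := by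
  have shift (f : ZMod n → ℝ) : ∑ x, f (x + k) = ∑ x, f x :=
    Equiv.sum_comp (Equiv.addRight k) f
  have hneg : ∑ x, θ x * θ (x + -k) = ∑ x, θ x * θ (x + k) := by
    rw [← shift]
    simp only [add_neg_cancel_right, mul_comm]
  have hsq : ∑ x, (θ x - θ (x + k)) ^ 2 = 2 * θ ⬝ᵥ θ - 2 * ∑ x, θ x * θ (x + k) := by
    calc ∑ x, (θ x - θ (x + k)) ^ 2
        = ∑ x, (θ x * θ x + θ (x + k) * θ (x + k) - 2 * (θ x * θ (x + k))) :=
          sum_congr rfl fun x _ => by ring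
      _ = 2 * θ ⬝ᵥ θ - 2 * ∑ x, θ x * θ (x + k) := by
          rw [sum_sub_distrib, sum_add_distrib, shift (fun x => θ x * θ x), ← mul_sum, dotProduct]
          ring
  have hn : (n : ℝ) ≠ 0 := Nat.cast_ne_zero.2 (NeZero.ne n)
  simp only [Amat_eq, Matrix.smul_mulVec, Matrix.sub_mulVec, dotProduct_smul, dotProduct_sub,
    Cmat_zero, Matrix.one_mulVec, dotProduct_Cmat_mulVec, hneg, hsq, smul_eq_mul]
  generalize θ ⬝ᵥ θ = a, ∑ x, θ x * θ (x + k) = b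
  field_simp
  ring

lemma cycMinSeg_intCast_le_of_ne_of_ne (θ : ZMod n → ℝ) {x : ZMod n} {e : ℕ} (he : 0 < e)
    (h₁ : θ x ≠ θ (x + 1)) (h₂ : θ (x + e) ≠ θ (x + e + 1)) :
    cycMinSeg n (fun i : ℤ => θ i) ≤ e :=
  cycMinSeg_le_of_ne_of_ne_s11 _ (i := x.val) he (by simpa using h₁) (by simpa using h₂)

lemma sum_sq_sub_add_natCast_eq_mul (θ : ZMod n → ℝ) {m : ℕ}
    (hm : m ≤ cycMinSeg n (fun i : ℤ => θ i)) :
    ∑ x, (θ x - θ (x + m)) ^ 2 = m * ∑ x, (θ x - θ (x + 1)) ^ 2 := by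
  set δ : ZMod n → ℕ → ℝ := fun x e => θ (x + e) - θ (x + e + 1) with hδ
  have htel (x : ZMod n) : θ x - θ (x + m) = ∑ e ∈ range m, δ x e := by
    simpa [hδ, add_assoc] using (sum_range_sub' (fun e => θ (x + e)) m).symm
  have hlt (x : ZMod n) {e f : ℕ} (hef : e < f) (hf : f < m) (he0 : δ x e ≠ 0) :
      δ x f = 0 := by
    by_contra hf0
    have := cycMinSeg_intCast_le_of_ne_of_ne θ (x := x + e) (e := f - e) (by omega)
      (sub_ne_zero.1 he0) (by rwa [add_assoc, ← Nat.cast_add, Nat.add_sub_cancel' hef.le,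
        ← sub_ne_zero])
    omega
  have hone (x : ZMod n) : ∀ e ∈ range m, ∀ f ∈ range m, δ x e ≠ 0 → δ x f ≠ 0 → e = f := by
    intro e he f hf he0 hf0
    rw [mem_range] at he hf
    rcases lt_trichotomy e f with h | h | h
    · exact absurd (hlt x h hf he0) hf0
    · exact h
    · exact absurd (hlt x h he hf0) he0
  have hshift (e : ℕ) : ∑ x, δ x e ^ 2 = ∑ x, (θ x - θ (x + 1)) ^ 2 :=
    Equiv.sum_comp (Equiv.addRight (e : ZMod n)) (fun y => (θ y - θ (y + 1)) ^ 2)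
  calc ∑ x, (θ x - θ (x + m)) ^ 2 = ∑ x, ∑ e ∈ range m, δ x e ^ 2 := by
        simp only [htel, sq_sum_eq_sum_sq_of_at_most_one_ne_zero (hone _)]
    _ = m * ∑ x, (θ x - θ (x + 1)) ^ 2 := by
        rw [sum_comm, sum_congr rfl fun e _ => hshift e, sum_const, card_range, nsmul_eq_mul]

lemma add_one_eq_zero_or_eq_of_segmentIndicator_ne {m : ℕ} {x : ZMod n}
    (h : segmentIndicator n m x ≠ segmentIndicator n m (x + 1)) : x + 1 = 0 ∨ x + 1 = m := by
  have hx : x + 1 = (x.val + 1 : ℕ) := by rw [Nat.cast_succ, ZMod.natCast_zmod_val]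
  rcases Nat.lt_or_ge (x.val + 1) n with hlt | hge
  swap
  · left
    rw [hx, show x.val + 1 = n by have := x.val_lt; omega, ZMod.natCast_self]
  · right
    rw [segmentIndicator, segmentIndicator, hx, ZMod.val_cast_of_lt hlt] at h
    rw [hx]
    congr 1
    split_ifs at h <;> first | omega | exact absurd rfl h

lemma min_le_cycMinSeg_segmentIndicator (m : ℕ) :
    min m (n - m) ≤ cycMinSeg n (fun i : ℤ => segmentIndicator n m i) := by
  refine le_csInf ⟨n, Or.inl rfl⟩ ?_
  rintro d (hd | ⟨hd, i, h₁, h₂, -⟩)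
  · rw [Set.mem_singleton_iff.1 hd]
    omega
  by_contra! hlt
  have hne (d : ℕ) (hd : 0 < d) (hdn : d < n) : (d : ZMod n) ≠ 0 := by
    rw [Ne, ZMod.natCast_eq_zero_iff]
    exact fun hdvd => by have := Nat.eq_zero_of_dvd_of_lt hdvd hdn; omega
  have hA := add_one_eq_zero_or_eq_of_segmentIndicator_ne (x := (i : ZMod n)) (by simpa using h₁)
  have hB := add_one_eq_zero_or_eq_of_segmentIndicator_ne (x := (i : ZMod n) + (d : ZMod n))
    (by simpa using h₂)
  have hd' : (d : ZMod n) = (i + d + 1 : ZMod n) - (i + 1) := by ring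
  rcases hA with hA | hA <;> rcases hB with hB | hB <;> rw [hA, hB] at hd'
  · exact hne d hd (by omega) (by simpa using hd')
  · have := congrArg ZMod.val (hd'.trans (sub_zero _))
    rw [ZMod.val_cast_of_lt (by omega), ZMod.val_cast_of_lt (by omega)] at this
    omega
  · exact hne (d + m) (by omega) (by omega) (by push_cast; rw [hd']; ring)
  · exact hne d hd (by omega) (by simpa using hd')

lemma segmentIndicator_dotProduct_mulVec (A : Matrix (ZMod n) (ZMod n) ℝ) {m : ℕ} (hm : m ≤ n) :
    segmentIndicator n m ⬝ᵥ A *ᵥ segmentIndicator n m =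
      ∑ p ∈ range m, ∑ q ∈ range m, A p q := by
  simp only [dotProduct, mulVec, segmentIndicator, ite_mul, one_mul, zero_mul, mul_ite, mul_one,
    mul_zero]
  rw [ZMod.sum_ite_val_lt _ hm]
  exact sum_congr rfl fun p _ => ZMod.sum_ite_val_lt _ hm

lemma eq_sum_smul_Amat {A : Matrix (ZMod n) (ZMod n) ℝ} {L : ℕ} (hL : 2 * L < n)
    (hA : ∀ i j, A i j = A 0 (j - i)) (hsymm : ∀ t, A 0 (-t) = A 0 t)
    (hdiag : A 0 0 + 2 * ∑ d ∈ range L, A 0 (d + 1 : ℕ) = 0)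
    (hzero : ∀ d : ℕ, L < d → d < n - L → A 0 d = 0) :
    A = ∑ d ∈ range L, (-2 * n * A 0 (d + 1 : ℕ)) • Amat n (d + 1 : ℕ) := by
  have hn : (n : ℝ) ≠ 0 := Nat.cast_ne_zero.2 (NeZero.ne n)
  have hterm (a : ℝ) (k : ZMod n) : (-2 * n * a) • Amat n k =
      (-2 * a) • Cmat n 0 + (a • Cmat n k + a • Cmat n (-k)) := by
    rw [Amat_eq]
    match_scalars <;> field_simp
  conv_lhs => rw [eq_sum_smul_Cmat hA,
    ZMod.sum_eq_add_sum_range_of_eq_zero _ hL fun d h₁ h₂ => by rw [hzero d h₁ h₂, zero_smul]]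
  simp only [hterm, hsymm, sum_add_distrib, ← sum_smul, ← mul_sum]
  rw [show -2 * ∑ d ∈ range L, A 0 (d + 1 : ℕ) = A 0 0 by linarith]

lemma dotProduct_sum_smul_mulVec {ι m R : Type*} [Fintype m] [CommSemiring R] (s : Finset ι)
    (c : ι → R) (M : ι → Matrix m m R) (X : m → R) :
    X ⬝ᵥ (∑ i ∈ s, c i • M i) *ᵥ X = ∑ i ∈ s, c i * (X ⬝ᵥ M i *ᵥ X) := by
  simp only [Matrix.sum_mulVec, dotProduct_sum, Matrix.smul_mulVec, dotProduct_smul, smul_eq_mul]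

section Combination

variable {L : ℕ} (c : Fin L → ℝ)

lemma isSymm_sum_smul_Amat : (∑ k : Fin L, c k • Amat n ((k : ℕ) + 1 : ℕ)).IsSymm := by
  simp only [Matrix.IsSymm, Matrix.transpose_sum, Matrix.transpose_smul, (Amat_isSymm _).eq]

lemma Cmat_transpose_mul_sum_smul_Amat_mul_Cmat (j : ZMod n) :
    (Cmat n j)ᵀ * (∑ k : Fin L, c k • Amat n ((k : ℕ) + 1 : ℕ)) * Cmat n j =
      ∑ k : Fin L, c k • Amat n ((k : ℕ) + 1 : ℕ) := by
  simp only [Matrix.mul_sum, Matrix.sum_mul, Matrix.mul_smul, Matrix.smul_mul,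
    Cmat_transpose_mul_Amat_mul_Cmat]

lemma trace_sum_smul_Amat (hL : L < n) :
    (∑ k : Fin L, c k • Amat n ((k : ℕ) + 1 : ℕ)).trace = ∑ k, c k := by
  refine (Matrix.trace_sum _ _).trans (sum_congr rfl fun k _ => ?_)
  rw [Matrix.trace_smul, trace_Amat, smul_eq_mul, mul_one]
  rw [Ne, ZMod.natCast_eq_zero_iff]
  exact fun h => absurd (Nat.le_of_dvd k.val.succ_pos h) (by omega)

lemma dotProduct_sum_smul_Amat_mulVec {θ : ZMod n → ℝ}
    (hθ : L ≤ cycMinSeg n (fun i : ℤ => θ i)) :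
    θ ⬝ᵥ (∑ k : Fin L, c k • Amat n ((k : ℕ) + 1 : ℕ)) *ᵥ θ =
      (∑ k : Fin L, ((k : ℕ) + 1 : ℝ) * c k) *
        ((2 * n : ℝ)⁻¹ * ∑ x, (θ x - θ (x + 1)) ^ 2) := by
  rw [dotProduct_sum_smul_mulVec, sum_mul]
  refine sum_congr rfl fun k _ => ?_
  rw [dotProduct_Amat_mulVec, sum_sq_sub_add_natCast_eq_mul θ (by omega)]
  push_cast
  ring

end Combination

lemma toeplitzSum_eq_zero_of_unbiased {A : Matrix (ZMod n) (ZMod n) ℝ} {L : ℕ}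
    (hA : ∀ i j, A i j = A 0 (j - i))
    (hunb : ∀ θ : ZMod n → ℝ, L ≤ cycMinSeg n (fun i : ℤ => θ i) → θ ⬝ᵥ A *ᵥ θ = 0)
    {m : ℕ} (hLm : L ≤ m) (hmn : m ≤ n - L) : toeplitzSum (A 0) m = 0 := by
  have := hunb _ ((le_min hLm (by omega)).trans (min_le_cycMinSeg_segmentIndicator m))
  rw [segmentIndicator_dotProduct_mulVec A (by omega)] at this
  simpa only [toeplitzSum, ← hA] using this

lemma exists_eq_sum_smul_Amat_of_unbiased {A : Matrix (ZMod n) (ZMod n) ℝ} {L : ℕ}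
    (hn : 2 * L < n) (hsymm : A.IsSymm) (hA : ∀ i j, A i j = A 0 (j - i)) (htr : A.trace = 1)
    (hunb : ∀ θ : ZMod n → ℝ, L ≤ cycMinSeg n (fun i : ℤ => θ i) → θ ⬝ᵥ A *ᵥ θ = 0) :
    ∃ c : Fin L → ℝ, (∑ k, c k = 1) ∧ (∑ k : Fin L, ((k : ℕ) + 1 : ℝ) * c k = 0) ∧
      A = ∑ k : Fin L, c k • Amat n ((k : ℕ) + 1 : ℕ) := by
  have heven (t : ZMod n) : A 0 (-t) = A 0 t := by rw [← hsymm.apply, hA, zero_sub, neg_neg]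
  have hdiag : n * A 0 0 = 1 := by
    simpa [Matrix.trace, hA] using htr
  have hT {m : ℕ} (h₁ : L ≤ m) (h₂ : m ≤ n - L) := toeplitzSum_eq_zero_of_unbiased hA hunb h₁ h₂
  have hS : A 0 0 + 2 * ∑ d ∈ range L, A 0 (d + 1 : ℕ) = 0 := by
    have := toeplitzSum_succ heven L
    rw [hT le_rfl (by omega), hT (by omega) (by omega)] at this
    linarith
  have hW := sum_range_mul_eq_zero_of_toeplitzSum_eq_zero heven (hT le_rfl (by omega))
    (hT (by omega) (by omega))
  have hzero (d : ℕ) (h₁ : L < d) (h₂ : d < n - L) : A 0 d = 0 := by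
    obtain ⟨m, rfl⟩ : ∃ m, d = m + 1 := ⟨d - 1, by omega⟩
    exact apply_eq_zero_of_toeplitzSum_eq_zero heven (hT (by omega) (by omega))
      (hT (by omega) (by omega)) (hT (by omega) (by omega))
  refine ⟨fun k => -2 * n * A 0 ((k : ℕ) + 1 : ℕ), ?_, ?_, ?_⟩
  · rw [Fin.sum_univ_eq_sum_range (fun d => -2 * n * A 0 (d + 1 : ℕ)), ← mul_sum]
    linear_combination -(n : ℝ) * hS + hdiag
  · rw [Fin.sum_univ_eq_sum_range (fun d => ((d : ℝ) + 1) * (-2 * n * A 0 (d + 1 : ℕ)))]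
    rw [← mul_zero (-2 * n : ℝ), ← hW, mul_sum]
    exact sum_congr rfl fun d _ => by ring
  · rw [Fin.sum_univ_eq_sum_range (fun d => (-2 * n * A 0 (d + 1 : ℕ)) • Amat n (d + 1 : ℕ))]
    exact eq_sum_smul_Amat hn hA heven hS hzero

lemma equivariant_unbiased_iff {L : ℕ} (hn : 2 * L < n) {A : Matrix (ZMod n) (ZMod n) ℝ}
    (hsymm : A.IsSymm) :
    ((∀ k, (Cmat n k)ᵀ * A * Cmat n k = A) ∧ A.trace = 1 ∧
        ∀ θ : ZMod n → ℝ, L ≤ cycMinSeg n (fun i : ℤ => θ i) → θ ⬝ᵥ A *ᵥ θ = 0) ↔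
      ∃ c : Fin L → ℝ, (∑ k, c k = 1) ∧ (∑ k : Fin L, ((k : ℕ) + 1 : ℝ) * c k = 0) ∧
        A = ∑ k : Fin L, c k • Amat n ((k : ℕ) + 1 : ℕ) := by
  refine ⟨fun ⟨hconj, htr, hunb⟩ => exists_eq_sum_smul_Amat_of_unbiased hn hsymm
    ((conj_Cmat_eq_self_iff A).1 hconj) htr hunb, ?_⟩
  rintro ⟨c, hc₁, hc₂, rfl⟩
  refine ⟨Cmat_transpose_mul_sum_smul_Amat_mul_Cmat c, ?_, fun θ hθ => ?_⟩
  · rw [trace_sum_smul_Amat c (by omega), hc₁]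
  · rw [dotProduct_sum_smul_Amat_mulVec c hθ, hc₂, zero_mul]

theorem equivariant_unbiased_iff_combination_general
    (n L : ℕ) [NeZero n] (hn : 2 * L + 2 ≤ n) :
    (∀ A : Matrix (ZMod n) (ZMod n) ℝ, A.IsSymm →
      (((∀ k : ZMod n, (Cmat n k)ᵀ * A * Cmat n k = A) ∧ A.trace = 1 ∧
          (∀ θ : ZMod n → ℝ, L ≤ cycMinSeg n (fun i : ℤ => θ (i : ZMod n)) →
            θ ⬝ᵥ A.mulVec θ = 0))
        ↔ (∃ c : Fin L → ℝ, (∑ k : Fin L, c k = 1) ∧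
            (∑ k : Fin L, ((k : ℕ) + 1 : ℝ) * c k = 0) ∧
            A = ∑ k : Fin L, c k • Amat n (((k : ℕ) + 1 : ℕ) : ZMod n)))) ∧
    (∀ q : (ZMod n → ℝ) → ℝ,
      ((∃ A : Matrix (ZMod n) (ZMod n) ℝ, A.IsSymm ∧
          (∀ k : ZMod n, (Cmat n k)ᵀ * A * Cmat n k = A) ∧ A.trace = 1 ∧
          (∀ θ : ZMod n → ℝ, L ≤ cycMinSeg n (fun i : ℤ => θ (i : ZMod n)) →
            θ ⬝ᵥ A.mulVec θ = 0) ∧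
          q = fun X => X ⬝ᵥ A.mulVec X)
        ↔ (∃ c : Fin L → ℝ, (∑ k : Fin L, c k = 1) ∧
            (∑ k : Fin L, ((k : ℕ) + 1 : ℝ) * c k = 0) ∧
            q = fun X => ∑ k : Fin L,
              c k * (X ⬝ᵥ (Amat n (((k : ℕ) + 1 : ℕ) : ZMod n)).mulVec X)))) := by
  have key (A : Matrix (ZMod n) (ZMod n) ℝ) (hsymm : A.IsSymm) :=
    equivariant_unbiased_iff (L := L) (by omega) hsymm
  refine ⟨key, fun q => ⟨?_, ?_⟩⟩
  · rintro ⟨A, hsymm, hconj, htr, hunb, rfl⟩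
    obtain ⟨c, hc₁, hc₂, rfl⟩ := (key A hsymm).1 ⟨hconj, htr, hunb⟩
    exact ⟨c, hc₁, hc₂, funext fun X => dotProduct_sum_smul_mulVec _ _ _ X⟩
  · rintro ⟨c, hc₁, hc₂, rfl⟩
    obtain ⟨hconj, htr, hunb⟩ := (key _ (isSymm_sum_smul_Amat c)).2 ⟨c, hc₁, hc₂, rfl⟩
    exact ⟨_, isSymm_sum_smul_Amat c, hconj, htr, hunb,
      funext fun X => (dotProduct_sum_smul_mulVec _ _ _ X).symm⟩

theorem equivariant_unbiased_iff_combination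
    (n L : ℕ) [NeZero n] (hL : 2 ≤ L) (hn : 2 * L + 2 ≤ n) :
    (∀ A : Matrix (ZMod n) (ZMod n) ℝ, A.IsSymm →
      (((∀ k : ZMod n, (Cmat n k)ᵀ * A * Cmat n k = A) ∧ A.trace = 1 ∧
          (∀ θ : ZMod n → ℝ, L ≤ cycMinSeg n (fun i : ℤ => θ (i : ZMod n)) →
            θ ⬝ᵥ A.mulVec θ = 0))
        ↔ (∃ c : Fin L → ℝ, (∑ k : Fin L, c k = 1) ∧
            (∑ k : Fin L, ((k : ℕ) + 1 : ℝ) * c k = 0) ∧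
            A = ∑ k : Fin L, c k • Amat n (((k : ℕ) + 1 : ℕ) : ZMod n)))) ∧
    (∀ q : (ZMod n → ℝ) → ℝ,
      ((∃ A : Matrix (ZMod n) (ZMod n) ℝ, A.IsSymm ∧
          (∀ k : ZMod n, (Cmat n k)ᵀ * A * Cmat n k = A) ∧ A.trace = 1 ∧
          (∀ θ : ZMod n → ℝ, L ≤ cycMinSeg n (fun i : ℤ => θ (i : ZMod n)) →
            θ ⬝ᵥ A.mulVec θ = 0) ∧
          q = fun X => X ⬝ᵥ A.mulVec X)
        ↔ (∃ c : Fin L → ℝ, (∑ k : Fin L, c k = 1) ∧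
            (∑ k : Fin L, ((k : ℕ) + 1 : ℝ) * c k = 0) ∧
            q = fun X => ∑ k : Fin L,
              c k * (X ⬝ᵥ (Amat n (((k : ℕ) + 1 : ℕ) : ZMod n)).mulVec X)))) :=
  equivariant_unbiased_iff_combination_general n L hn
end

section
/- Let L ≥ 2 be an integer and let θ ∈ ℝⁿ be nonconstant. (i) If L(θ) ≥ 2L, then for all integers 1 ≤ k, ℓ ≤ L one has Σ_{i=1}^n (θ_i − θ_{i+k+ℓ})² = (k+ℓ)·W(θ), so that G(θ)_{kℓ} = |k−ℓ| + k + ℓ = 2·max{k, ℓ}; in particular, for such θ the quadratic form c ↦ c^⊤(I_L − (W(θ)/(nσ²))·G(θ))c depends on (θ, σ²) only through the ratio W(θ)/(nσ²). (ii) For any θ with L(θ) ≥ L and any σ > 0, the function c ↦ κ₄ − 1 + c^⊤(I_L − (W(θ)/(nσ²))·G(θ))c attains a unique minimizer over the affine set {c ∈ ℝ^L : Σ_{k=1}^L c_k = 1, Σ_{k=1}^L k·c_k = 0}. -/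
/-
Write `Δθ` for the forward difference of `θ`. A jump `Δθ x ≠ 0` is followed by a run of at least
`L(θ)` constant steps, so `Δθ x * Δθ y = 0` whenever `0 < |x - y| < L(θ)`: shifts of `Δθ` spread
over fewer than `L(θ)` places are orthogonal over a period, each of squared norm `W(θ)`.

(i) `θ_i - θ_{i+m}` is a sum of `m` consecutive differences, so orthogonality gives
`∑ (θ_i - θ_{i+m})² = m W(θ)` for `m ≤ L(θ)`.

(ii) Let `∑ c_k = 0` and let `T_m = ∑_{k ≥ m} c_k` be the tail sums. Then
`∑ c_k c_l |k - l| = -2 ∑ T_m²`, and by Abel summation and periodicity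
`∑ c_k c_l ∑_i (θ_i - θ_{i+k+l})² = 2 ∑_i A_i B_i`, where `A` and `B` combine `L` consecutive
shifts of `Δθ` with coefficients `T_m`; hence `|A|² = |B|² = W ∑ T_m²` and the cross term is at
most `2 W ∑ T_m²`. The two bounds cancel, so the quadratic form dominates `∑ c_k²` on the
direction of the constraint set. A quadratic form that is positive definite on the direction of
an affine subspace has exactly one minimizer on it.
-/

open Finset

/-- `W(θ) = ∑_{i=1}^n (θ_i - θ_{i+1})²`. -/
def Wtv (n : ℕ) (θ : ℤ → ℝ) : ℝ :=
  ∑ i ∈ Finset.range n, (θ (i + 1) - θ (i + 2)) ^ 2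

/-- `G(θ)_{kℓ} = |k-ℓ| + (1/W(θ)) ∑_{i=1}^n (θ_i - θ_{i+k+ℓ})²`. -/
noncomputable def Gmat (n : ℕ) (θ : ℤ → ℝ) (k l : ℕ) : ℝ :=
  |(k : ℝ) - (l : ℝ)| +
    1 / Wtv n θ * ∑ i ∈ Finset.range n, (θ (i + 1) - θ (i + 1 + k + l)) ^ 2

/-- The quadratic form `c ↦ cᵀ (I_L - (W(θ)/(nσ²)) G(θ)) c` (with `1`-based lags). -/
noncomputable def quadForm (n L : ℕ) (θ : ℤ → ℝ) (σ : ℝ) (c : Fin L → ℝ) : ℝ :=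
  ∑ k : Fin L, ∑ l : Fin L, c k * c l *
    ((if k = l then (1 : ℝ) else 0)
      - Wtv n θ / (n * σ ^ 2) * Gmat n θ ((k : ℕ) + 1) ((l : ℕ) + 1))

open Function fwdDiff

theorem LinearMap.BilinForm.existsUnique_minimizer_of_pos_on_ker
    {E F : Type*} [AddCommGroup E] [Module ℝ E] [FiniteDimensional ℝ E]
    [AddCommGroup F] [Module ℝ F]
    (B : LinearMap.BilinForm ℝ E) (hB : B.IsSymm) (φ : E →ₗ[ℝ] F) {y : F}
    (hy : ∃ c₀, φ c₀ = y) (hpos : ∀ v ∈ LinearMap.ker φ, v ≠ 0 → 0 < B v v) :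
    ∃! c, φ c = y ∧ ∀ c', φ c' = y → B c c ≤ B c' c' := by
  obtain ⟨c₀, hc₀⟩ := hy
  have hdisj : Disjoint (LinearMap.ker φ) (B.orthogonal (LinearMap.ker φ)) := by
    refine Submodule.disjoint_def.mpr fun v hv hvo => ?_
    by_contra hne
    exact (hpos v hv hne).ne' (hvo v hv)
  -- The minimizer is the component of `c₀` in the `B`-orthogonal complement of `ker φ`.
  obtain ⟨v, hv, c, hc, rfl⟩ := Submodule.mem_sup.mp
    (((isCompl_orthogonal_iff_disjoint hB.isRefl).mpr hdisj).sup_eq_top ▸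
      Submodule.mem_top (x := c₀))
  have hφc : φ c = y := by simpa [LinearMap.mem_ker.mp hv] using hc₀
  have hexpand : ∀ c', φ c' = y → B c' c' = B c c + B (c' - c) (c' - c) := by
    intro c' hc'
    have horth : B (c' - c) c = 0 := hc _ (by simp [hc', hφc])
    have horth' : B c (c' - c) = 0 := by rw [hB.eq, horth]
    calc B c' c' = B (c + (c' - c)) (c + (c' - c)) := by rw [add_sub_cancel]
      _ = _ := by
        simp only [map_add, LinearMap.add_apply, horth, horth', add_zero, zero_add]
  refine ⟨c, ⟨hφc, fun c' hc' => ?_⟩, fun c' ⟨hc', hmin⟩ => ?_⟩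
  · rw [hexpand c' hc']
    by_cases h : c' - c = 0
    · simp [h]
    · exact le_add_of_nonneg_right (hpos _ (by simp [hc', hφc]) h).le
  · by_contra hne
    have := hpos (c' - c) (by simp [hc', hφc]) (sub_ne_zero.mpr hne)
    linarith [hmin c hφc, hexpand c' hc']

theorem Function.Periodic.sum_range_comp_add_one {M : Type*} [AddCommMonoid M] {f : ℤ → M}
    {n : ℕ} (hf : Periodic f n) : ∑ i ∈ range n, f (i + 1) = ∑ i ∈ range n, f i := by
  cases n with
  | zero => rfl
  | succ m =>
    have hwrap : f (m + 1) = f 0 := by simpa using hf 0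
    rw [sum_range_succ, sum_range_succ' (fun i : ℕ => f i)]
    push_cast
    rw [hwrap, add_comm]

theorem Function.Periodic.sum_range_comp_add {M : Type*} [AddCommMonoid M] {f : ℤ → M}
    {n : ℕ} (hf : Periodic f n) (c : ℤ) : ∑ i ∈ range n, f (i + c) = ∑ i ∈ range n, f i := by
  induction c using Int.induction_on with
  | zero => simp
  | succ k ih =>
    rw [← ih, ← (hf.add_const (k : ℤ)).sum_range_comp_add_one]
    exact sum_congr rfl fun i _ => by ring_nf
  | pred k ih =>
    rw [← ih, ← (hf.add_const (-k - 1 : ℤ)).sum_range_comp_add_one]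
    exact sum_congr rfl fun i _ => by ring_nf

theorem Function.Periodic.fwdDiff {M G : Type*} [AddCommMonoid M] [AddCommGroup G]
    {f : M → G} {c h : M} (hf : Periodic f c) : Periodic (Δ_[h] f) c := fun x => by
  simp only [_root_.fwdDiff, add_right_comm x c h, hf x, hf (x + h)]

theorem sum_sq_sum_mul_comp_add {R : Type*} [CommRing R] {n L : ℕ} {d : ℤ → R}
    (hd : Periodic d n) (a : ℕ → R) (e : ℕ → ℤ)
    (horth : ∀ x, ∀ m ∈ range L, ∀ m' ∈ range L, m ≠ m' → d (x + e m) * d (x + e m') = 0) :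
    ∑ i ∈ range n, (∑ m ∈ range L, a m * d (i + e m)) ^ 2
      = (∑ m ∈ range L, a m ^ 2) * ∑ i ∈ range n, d i ^ 2 := by
  have hdiag : ∀ x : ℤ, (∑ m ∈ range L, a m * d (x + e m)) ^ 2
      = ∑ m ∈ range L, a m ^ 2 * d (x + e m) ^ 2 := by
    intro x
    rw [sq, sum_mul_sum]
    refine sum_congr rfl fun m hm => ?_
    rw [sum_eq_single_of_mem m hm fun m' hm' hne => ?_]
    · ring
    · rw [mul_mul_mul_comm, horth x m hm m' hm' hne.symm, mul_zero]
  simp only [hdiag]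
  rw [sum_comm, sum_mul]
  refine sum_congr rfl fun m _ => ?_
  rw [← mul_sum]
  exact congrArg (a m ^ 2 * ·) ((hd.comp (· ^ 2)).sum_range_comp_add (e m))

theorem sum_range_ite_le {M : Type*} [AddCommMonoid M] {k L : ℕ} (hk : k < L) (g : ℕ → M) :
    ∑ m ∈ range L, (if m ≤ k then g m else 0) = ∑ m ∈ range (k + 1), g m := by
  rw [← sum_filter]
  congr 1
  ext m
  simp only [mem_filter, mem_range]
  omega

theorem sum_range_boole_mul_boole {k l L : ℕ} (hk : k < L) :
    ∑ m ∈ range L, (if m ≤ k then (1 : ℝ) else 0) * (if m ≤ l then 1 else 0) = min k l + 1 := by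
  simp only [boole_mul, ← ite_and, ← le_min_iff]
  rw [sum_range_ite_le (min_lt_of_left_lt hk)]
  simp

section TailSums

variable {L : ℕ} (c : Fin L → ℝ)

def tailSum (m : ℕ) : ℝ := ∑ k : Fin L, if m ≤ (k : ℕ) then c k else 0

/-- Abel summation. -/
theorem sum_mul_comp_succ (f : ℕ → ℝ) :
    ∑ k, c k * f (k + 1) = f 0 * ∑ k, c k + ∑ m ∈ range L, tailSum c m * Δ_[1] f m := by
  have htele : ∀ k : Fin L,
      f (k + 1) = f 0 + ∑ m ∈ range L, if m ≤ (k : ℕ) then Δ_[1] f m else 0 := fun k => by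
    rw [sum_range_ite_le k.isLt]
    simp only [fwdDiff]
    rw [sum_range_sub]
    ring
  simp only [htele, mul_add, sum_add_distrib, tailSum, sum_mul, mul_sum]
  rw [sum_comm (s := univ)]
  congr 1
  · exact sum_congr rfl fun k _ => mul_comm _ _
  · exact sum_congr rfl fun m _ => sum_congr rfl fun k _ => by split_ifs <;> ring

theorem sum_sum_mul_add_eq_zero (hc : ∑ k, c k = 0) (a b : Fin L → ℝ) :
    ∑ k, ∑ l, c k * c l * (a k + b l) = 0 := by
  simp only [mul_add, sum_add_distrib]
  simp only [mul_right_comm (c _) (c _) (a _), ← mul_sum, ← sum_mul, mul_assoc, hc,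
    mul_zero, zero_mul, sum_const_zero, add_zero]

theorem sum_sum_mul_abs_sub (hc : ∑ k, c k = 0) :
    ∑ k, ∑ l, c k * c l * |((k : ℕ) : ℝ) - (l : ℕ)| = -2 * ∑ m ∈ range L, tailSum c m ^ 2 := by
  set N : Fin L → Fin L → ℝ := fun k l =>
    ∑ m ∈ range L, (if m ≤ (k : ℕ) then (1 : ℝ) else 0) * (if m ≤ (l : ℕ) then 1 else 0)
  have habs : ∀ k l : Fin L,
      |((k : ℕ) : ℝ) - (l : ℕ)| = ((k + 1 : ℝ) + (l + 1 : ℝ)) - 2 * N k l := fun k l => by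
    simp only [N, sum_range_boole_mul_boole k.isLt]
    push_cast
    linarith [min_add_max ((k : ℕ) : ℝ) (l : ℕ), max_sub_min_eq_abs' ((k : ℕ) : ℝ) (l : ℕ)]
  have hsq : ∑ m ∈ range L, tailSum c m ^ 2 = ∑ k, ∑ l, c k * c l * N k l := by
    calc ∑ m ∈ range L, tailSum c m ^ 2
        = ∑ m ∈ range L, ∑ k, ∑ l, c k * c l
            * ((if m ≤ (k : ℕ) then (1 : ℝ) else 0) * (if m ≤ (l : ℕ) then 1 else 0)) :=
          sum_congr rfl fun m _ => by
            rw [sq, tailSum, sum_mul_sum]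
            exact sum_congr rfl fun k _ => sum_congr rfl fun l _ => by split_ifs <;> ring
      _ = ∑ k, ∑ l, c k * c l * N k l := by
          rw [sum_comm]
          simp only [N, mul_sum]
          exact sum_congr rfl fun k _ => sum_comm
  simp only [habs, mul_sub, sum_sub_distrib, sum_sum_mul_add_eq_zero c hc, hsq, mul_sum,
    zero_sub, ← sum_neg_distrib]
  exact sum_congr rfl fun k _ => sum_congr rfl fun l _ => by ring

end TailSums

noncomputable def lagSqSum (n : ℕ) (θ : ℤ → ℝ) (m : ℕ) : ℝ :=
  ∑ i ∈ range n, (θ (i + 1) - θ (i + 1 + m)) ^ 2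

section Runs

variable {n L : ℕ} {θ : ℤ → ℝ}

theorem cycMinSeg_le_of_fwdDiff_ne_zero {t : ℕ} (ht : 0 < t) {i : ℤ} (h₁ : Δ_[1] θ i ≠ 0)
    (h₂ : Δ_[1] θ (i + t) ≠ 0) : cycMinSeg n θ ≤ t := by
  induction t using Nat.strong_induction_on with
  | _ t ih =>
    by_cases hmid : ∃ e : ℕ, 0 < e ∧ e < t ∧ Δ_[1] θ (i + e) ≠ 0
    · obtain ⟨e, he, het, hjump⟩ := hmid
      exact (ih e het he hjump).trans het.le
    · push Not at hmid
      simp only [fwdDiff, ne_eq, sub_eq_zero] at h₁ h₂ hmid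
      exact Nat.sInf_le (Or.inr ⟨ht, i, Ne.symm h₁, Ne.symm h₂,
        fun e he het => (hmid e he het).symm⟩)

theorem fwdDiff_mul_fwdDiff_eq_zero {x y : ℤ} (hxy : x ≠ y)
    (hdist : (x - y).natAbs < cycMinSeg n θ) : Δ_[1] θ x * Δ_[1] θ y = 0 := by
  wlog hlt : x < y generalizing x y
  · rw [mul_comm]
    exact this hxy.symm (by rwa [← Int.natAbs_neg, neg_sub]) (by omega)
  obtain ⟨t, rfl⟩ : ∃ t : ℕ, y = x + t := ⟨(y - x).toNat, by omega⟩
  by_contra h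
  obtain ⟨h₁, h₂⟩ := mul_ne_zero_iff.mp h
  have := cycMinSeg_le_of_fwdDiff_ne_zero (n := n) (by omega) h₁ h₂
  omega

theorem exists_fwdDiff_ne_zero (hne : ∃ i j, θ i ≠ θ j) : ∃ i, Δ_[1] θ i ≠ 0 := by
  by_contra! h
  have hper : Periodic θ 1 := fun i => sub_eq_zero.mp (h i)
  obtain ⟨i, j, hij⟩ := hne
  exact hij (by simpa using (hper.zsmul_eq i).trans (hper.zsmul_eq j).symm)

theorem Wtv_eq_sum_sq_fwdDiff (hθ : Periodic θ n) :
    Wtv n θ = ∑ i ∈ range n, Δ_[1] θ i ^ 2 := by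
  have hshift := ((hθ.fwdDiff (h := 1)).comp (· ^ 2)).sum_range_comp_add_one
  simp only [comp_apply] at hshift
  rw [← hshift]
  exact sum_congr rfl fun i _ => by simp only [fwdDiff]; ring_nf

theorem Wtv_pos (hn : 0 < n) (hθ : Periodic θ n) (hne : ∃ i j, θ i ≠ θ j) :
    0 < Wtv n θ := by
  obtain ⟨j, hj⟩ := exists_fwdDiff_ne_zero hne
  obtain ⟨i, hi, hij⟩ := hθ.fwdDiff.exists_mem_Ico₀ (by exact_mod_cast hn) j
  have hmem : i.toNat ∈ range n := by
    simp only [Set.mem_Ico] at hi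
    simp only [mem_range]
    omega
  rw [Wtv_eq_sum_sq_fwdDiff hθ]
  refine lt_of_lt_of_le ?_
    (single_le_sum (f := fun k : ℕ => Δ_[1] θ k ^ 2) (fun k _ => sq_nonneg _) hmem)
  rw [Int.toNat_of_nonneg hi.1, ← hij]
  positivity

theorem Gmat_eq (k l : ℕ) :
    Gmat n θ k l = |(k : ℝ) - l| + lagSqSum n θ (k + l) / Wtv n θ := by
  simp only [Gmat, lagSqSum, Nat.cast_add, add_assoc, one_div_mul_eq_div]

theorem Gmat_comm (k l : ℕ) : Gmat n θ k l = Gmat n θ l k := by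
  rw [Gmat_eq, Gmat_eq, abs_sub_comm, add_comm k]

theorem lagSqSum_eq_mul_Wtv (hθ : Periodic θ n) {m : ℕ} (hm : m ≤ cycMinSeg n θ) :
    lagSqSum n θ m = m * Wtv n θ := by
  have htele : ∀ i : ℤ, (θ (i + 1) - θ (i + 1 + m)) ^ 2
      = (∑ j ∈ range m, 1 * Δ_[1] θ (i + (j + 1 : ℕ))) ^ 2 := by
    intro i
    have h := sum_range_sub (fun j : ℕ => θ (i + 1 + j)) m
    rw [Nat.cast_zero, add_zero] at h
    rw [← neg_sq, neg_sub, ← h]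
    simp only [fwdDiff, one_mul]
    push_cast
    exact congrArg (· ^ 2) (sum_congr rfl fun j _ => by ring_nf)
  simp only [lagSqSum, htele]
  rw [sum_sq_sum_mul_comp_add hθ.fwdDiff _ _ fun x j hj j' hj' hne => ?_,
    Wtv_eq_sum_sq_fwdDiff hθ]
  · simp
  · simp only [mem_range] at hj hj'
    exact fwdDiff_mul_fwdDiff_eq_zero (n := n) (by omega) (by omega)

theorem Gmat_eq_two_mul_max (hn : 0 < n) (hθ : Periodic θ n) (hne : ∃ i j, θ i ≠ θ j)
    {k l : ℕ} (hkl : k + l ≤ cycMinSeg n θ) : Gmat n θ k l = 2 * max (k : ℝ) l := by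
  rw [Gmat_eq, lagSqSum_eq_mul_Wtv hθ hkl, Nat.cast_add,
    mul_div_cancel_right₀ _ (Wtv_pos hn hθ hne).ne', ← max_sub_min_eq_abs',
    ← min_add_max (k : ℝ)]
  ring

theorem lagSqSum_eq_sub (hθ : Periodic θ n) (m : ℕ) :
    lagSqSum n θ m = 2 * ∑ i ∈ range n, θ i ^ 2 - 2 * ∑ i ∈ range n, θ i * θ (i + m) := by
  have h₁ := (hθ.comp (· ^ 2)).sum_range_comp_add 1
  have h₂ := (hθ.comp (· ^ 2)).sum_range_comp_add (1 + m)
  have h₃ := (hθ.mul (hθ.add_const (m : ℤ))).sum_range_comp_add 1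
  simp only [comp_apply, Pi.mul_apply, ← add_assoc] at h₁ h₂ h₃
  simp only [lagSqSum, sub_sq, sum_add_distrib, sum_sub_distrib, mul_assoc, ← mul_sum,
    h₁, h₂, h₃]
  ring

variable (c : Fin L → ℝ)

theorem sum_mul_comp_sub (hc : ∑ k, c k = 0) (i : ℤ) :
    ∑ k, c k * θ (i - k) = -∑ m ∈ range L, tailSum c m * Δ_[1] θ (i - m) := by
  have h := sum_mul_comp_succ c (fun j : ℕ => θ (i + 1 - j))
  rw [hc, mul_zero, zero_add] at h
  simp only [fwdDiff, Nat.cast_add, Nat.cast_one, add_sub_add_right_eq_sub] at h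
  rw [h, ← sum_neg_distrib]
  exact sum_congr rfl fun m _ => by simp only [fwdDiff]; ring_nf

theorem sum_mul_comp_add (hc : ∑ k, c k = 0) (i : ℤ) :
    ∑ k, c k * θ (i + 1 + ((k : ℕ) + 1 : ℕ))
      = ∑ m ∈ range L, tailSum c m * Δ_[1] θ (i + 1 + m) := by
  rw [sum_mul_comp_succ c (fun j : ℕ => θ (i + 1 + j)), hc, mul_zero, zero_add]
  exact sum_congr rfl fun m _ => by simp only [fwdDiff]; push_cast; ring_nf

theorem sum_sum_mul_lagSqSum (hθ : Periodic θ n) (hc : ∑ k, c k = 0) :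
    ∑ k, ∑ l, c k * c l * lagSqSum n θ ((k : ℕ) + 1 + ((l : ℕ) + 1))
      = 2 * ∑ i ∈ range n, (∑ m ∈ range L, tailSum c m * Δ_[1] θ (i - m))
          * ∑ m ∈ range L, tailSum c m * Δ_[1] θ (i + 1 + m) := by
  set P := ∑ i ∈ range n, θ i ^ 2
  -- The constant part is written as `P + P` to match `sum_sum_mul_add_eq_zero`; shifting `i` by
  -- `k` separates the two lags in the cross term.
  have hsplit : ∀ k l : Fin L, lagSqSum n θ ((k : ℕ) + 1 + ((l : ℕ) + 1)) = (P + P)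
      - 2 * ∑ i ∈ range n, θ (i - (k : ℕ)) * θ (i + 1 + ((l : ℕ) + 1 : ℕ)) := fun k l => by
    have h := ((hθ.sub_const ((k : ℕ) : ℤ)).mul
      (hθ.add_const (1 + (((l : ℕ) + 1 : ℕ) : ℤ)))).sum_range_comp_add ((k : ℕ) : ℤ)
    rw [lagSqSum_eq_sub hθ, ← two_mul]
    congr 2
    convert h using 2 <;>
    · simp only [Pi.mul_apply, add_sub_cancel_right]
      push_cast
      ring_nf
  have hfac : ∀ i : ℕ, (∑ k, c k * θ (i - (k : ℕ))) * ∑ l, c l * θ (i + 1 + ((l : ℕ) + 1 : ℕ))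
      = ∑ k, ∑ l, c k * c l * (θ (i - (k : ℕ)) * θ (i + 1 + ((l : ℕ) + 1 : ℕ))) := fun i => by
    rw [sum_mul_sum]
    exact sum_congr rfl fun k _ => sum_congr rfl fun l _ => by ring
  simp only [hsplit, mul_sub, sum_sub_distrib, sum_sum_mul_add_eq_zero c hc, zero_sub]
  calc -∑ k, ∑ l, c k * c l
          * (2 * ∑ i ∈ range n, θ (i - (k : ℕ)) * θ (i + 1 + ((l : ℕ) + 1 : ℕ)))
      = 2 * ∑ i ∈ range n, (-∑ k, c k * θ (i - (k : ℕ)))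
          * ∑ l, c l * θ (i + 1 + ((l : ℕ) + 1 : ℕ)) := by
        simp only [neg_mul, sum_neg_distrib, mul_neg, hfac]
        simp only [mul_sum]
        congr 1
        conv_rhs => rw [sum_comm]
        refine sum_congr rfl fun k _ => ?_
        conv_rhs => rw [sum_comm]
        exact sum_congr rfl fun l _ => sum_congr rfl fun i _ => by ring
    _ = _ := by simp only [sum_mul_comp_sub c hc, sum_mul_comp_add c hc, neg_neg]

variable {c}

theorem sum_sum_mul_lagSqSum_le (hθ : Periodic θ n) (hseg : L ≤ cycMinSeg n θ)
    (hc : ∑ k, c k = 0) :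
    ∑ k, ∑ l, c k * c l * lagSqSum n θ ((k : ℕ) + 1 + ((l : ℕ) + 1))
      ≤ 2 * (∑ m ∈ range L, tailSum c m ^ 2) * Wtv n θ := by
  rw [sum_sum_mul_lagSqSum c hθ hc]
  set A : ℕ → ℝ := fun i => ∑ m ∈ range L, tailSum c m * Δ_[1] θ (i - m)
  set B : ℕ → ℝ := fun i => ∑ m ∈ range L, tailSum c m * Δ_[1] θ (i + 1 + m)
  have hA : ∑ i ∈ range n, A i ^ 2 = (∑ m ∈ range L, tailSum c m ^ 2) * Wtv n θ := by
    simp only [A, Wtv_eq_sum_sq_fwdDiff hθ, sub_eq_add_neg]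
    refine sum_sq_sum_mul_comp_add hθ.fwdDiff _ (fun m => -(m : ℤ)) fun x m hm m' hm' hne => ?_
    simp only [mem_range] at hm hm'
    exact fwdDiff_mul_fwdDiff_eq_zero (n := n) (by omega) (by omega)
  have hB : ∑ i ∈ range n, B i ^ 2 = (∑ m ∈ range L, tailSum c m ^ 2) * Wtv n θ := by
    simp only [B, Wtv_eq_sum_sq_fwdDiff hθ, add_assoc]
    refine sum_sq_sum_mul_comp_add hθ.fwdDiff _ (fun m => 1 + (m : ℤ)) fun x m hm m' hm' hne => ?_
    simp only [mem_range] at hm hm'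
    exact fwdDiff_mul_fwdDiff_eq_zero (n := n) (by omega) (by omega)
  calc 2 * ∑ i ∈ range n, A i * B i ≤ ∑ i ∈ range n, (A i ^ 2 + B i ^ 2) := by
        rw [mul_sum]
        exact sum_le_sum fun i _ => by rw [← mul_assoc]; exact two_mul_le_add_sq _ _
    _ = _ := by rw [sum_add_distrib, hA, hB]; ring

theorem quadForm_eq (σ : ℝ) (c : Fin L → ℝ) :
    quadForm n L θ σ c = ∑ k, c k ^ 2
      - Wtv n θ / (n * σ ^ 2) * ∑ k, ∑ l, c k * c l * |((k : ℕ) : ℝ) - (l : ℕ)|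
      - Wtv n θ / (n * σ ^ 2) / Wtv n θ
          * ∑ k, ∑ l, c k * c l * lagSqSum n θ ((k : ℕ) + 1 + ((l : ℕ) + 1)) := by
  set r := Wtv n θ / (n * σ ^ 2)
  have hpt : ∀ k l : Fin L, c k * c l
      * ((if k = l then 1 else 0) - r * Gmat n θ ((k : ℕ) + 1) ((l : ℕ) + 1))
      = (if k = l then c k * c l else 0) - r * (c k * c l * |((k : ℕ) : ℝ) - (l : ℕ)|)
        - r / Wtv n θ * (c k * c l * lagSqSum n θ ((k : ℕ) + 1 + ((l : ℕ) + 1))) := by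
    intro k l
    rw [Gmat_eq]
    push_cast
    rw [add_sub_add_right_eq_sub]
    split_ifs <;> ring
  unfold quadForm
  rw [sum_congr rfl fun k _ => sum_congr rfl fun l _ => hpt k l]
  simp only [sum_sub_distrib, ← mul_sum, sum_ite_eq, mem_univ, if_true, ← sq]

theorem sum_sq_le_quadForm (hθ : Periodic θ n) (hseg : L ≤ cycMinSeg n θ) (σ : ℝ)
    (hc : ∑ k, c k = 0) : ∑ k, c k ^ 2 ≤ quadForm n L θ σ c := by
  set r := Wtv n θ / (n * σ ^ 2)
  set S := ∑ m ∈ range L, tailSum c m ^ 2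
  have hW : 0 ≤ Wtv n θ := sum_nonneg fun _ _ => sq_nonneg _
  have hbound := mul_le_mul_of_nonneg_left (sum_sum_mul_lagSqSum_le hθ hseg hc)
    (by positivity : 0 ≤ r / Wtv n θ)
  have hcancel : r / Wtv n θ * (2 * S * Wtv n θ) = 2 * S * r := by
    rw [mul_left_comm, mul_assoc, div_mul_cancel_of_imp fun h => by simp [r, h], mul_assoc]
  rw [quadForm_eq, sum_sum_mul_abs_sub c hc]
  linarith

end Runs

noncomputable def quadMatrix (n L : ℕ) (θ : ℤ → ℝ) (σ : ℝ) : Matrix (Fin L) (Fin L) ℝ :=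
  Matrix.of fun k l =>
    (if k = l then 1 else 0) - Wtv n θ / (n * σ ^ 2) * Gmat n θ ((k : ℕ) + 1) ((l : ℕ) + 1)

theorem quadMatrix_isSymm (n L : ℕ) (θ : ℤ → ℝ) (σ : ℝ) : (quadMatrix n L θ σ).IsSymm :=
  Matrix.IsSymm.ext fun k l => by
    simp only [quadMatrix, Matrix.of_apply, Gmat_comm ((l : ℕ) + 1), eq_comm]

theorem quadForm_eq_toBilin' (n L : ℕ) (θ : ℤ → ℝ) (σ : ℝ) (c : Fin L → ℝ) :
    quadForm n L θ σ c = (quadMatrix n L θ σ).toBilin' c c := by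
  simp only [quadForm, Matrix.toBilin'_apply, quadMatrix, Matrix.of_apply, mul_right_comm (c _)]

def momentConstraint (L : ℕ) : (Fin L → ℝ) →ₗ[ℝ] ℝ × ℝ where
  toFun c := (∑ k, c k, ∑ k : Fin L, ((k : ℕ) + 1 : ℝ) * c k)
  map_add' c c' := by simp only [Pi.add_apply, mul_add, sum_add_distrib, Prod.mk_add_mk]
  map_smul' a c := by
    simp only [Pi.smul_apply, smul_eq_mul, mul_sum, mul_left_comm a, RingHom.id_apply,
      Prod.smul_mk]

theorem exists_momentConstraint_eq {L : ℕ} (hL : 2 ≤ L) : ∃ c, momentConstraint L c = (1, 0) :=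
  ⟨Pi.single ⟨0, by omega⟩ 2 - Pi.single ⟨1, by omega⟩ 1, by
    norm_num [momentConstraint, sum_sub_distrib, mul_sub, Pi.single_apply]⟩

theorem existsUnique_quadForm_minimizer {n L : ℕ} {θ : ℤ → ℝ} (hθ : Periodic θ n) (hL : 2 ≤ L)
    (hseg : L ≤ cycMinSeg n θ) (σ : ℝ) :
    ∃! c, momentConstraint L c = (1, 0) ∧
      ∀ c', momentConstraint L c' = (1, 0) → quadForm n L θ σ c ≤ quadForm n L θ σ c' := by
  simp only [quadForm_eq_toBilin']
  refine LinearMap.BilinForm.existsUnique_minimizer_of_pos_on_ker _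
    (Matrix.isSymm_toBilin'_iff_isSymm.mpr (quadMatrix_isSymm n L θ σ)) _
    (exists_momentConstraint_eq hL) fun v hv hne => ?_
  rw [← quadForm_eq_toBilin']
  have hsum : ∑ k, v k = 0 := congrArg Prod.fst hv
  refine lt_of_lt_of_le ?_ (sum_sq_le_quadForm hθ hseg σ hsum)
  obtain ⟨k, hk⟩ := Function.ne_iff.mp hne
  exact sum_pos' (fun _ _ => sq_nonneg _) ⟨k, mem_univ k, pow_two_pos_of_ne_zero hk⟩

theorem Gmat_structure_and_unique_minimizer_general
    (n : ℕ) (hn : 2 ≤ n) (L : ℕ) (hL : 2 ≤ L) (κ₄ : ℝ) :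
    -- (i)
    (∀ θ : ℤ → ℝ, (∀ i : ℤ, θ (i + n) = θ i) → (∃ i j : ℤ, θ i ≠ θ j) →
      2 * L ≤ cycMinSeg n θ →
      (∀ k l : ℕ, 1 ≤ k → k ≤ L → 1 ≤ l → l ≤ L →
        (∑ i ∈ Finset.range n, (θ (i + 1) - θ (i + 1 + k + l)) ^ 2
            = (k + l) * Wtv n θ) ∧
        Gmat n θ k l = 2 * max k l)) ∧
    -- in particular, the quadratic form depends only on the ratio `W(θ)/(nσ²)`
    (∀ θ₁ θ₂ : ℤ → ℝ, ∀ σ₁ σ₂ : ℝ,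
      (∀ i : ℤ, θ₁ (i + n) = θ₁ i) → (∀ i : ℤ, θ₂ (i + n) = θ₂ i) →
      (∃ i j : ℤ, θ₁ i ≠ θ₁ j) → (∃ i j : ℤ, θ₂ i ≠ θ₂ j) →
      0 < σ₁ → 0 < σ₂ →
      2 * L ≤ cycMinSeg n θ₁ → 2 * L ≤ cycMinSeg n θ₂ →
      Wtv n θ₁ / (n * σ₁ ^ 2) = Wtv n θ₂ / (n * σ₂ ^ 2) →
      ∀ c : Fin L → ℝ, quadForm n L θ₁ σ₁ c = quadForm n L θ₂ σ₂ c) ∧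
    -- (ii) unique minimizer over the affine constraint set
    (∀ θ : ℤ → ℝ, (∀ i : ℤ, θ (i + n) = θ i) → (∃ i j : ℤ, θ i ≠ θ j) →
      L ≤ cycMinSeg n θ → ∀ σ : ℝ, 0 < σ →
      ∃! c : Fin L → ℝ,
        ((∑ k : Fin L, c k = 1) ∧ (∑ k : Fin L, ((k : ℕ) + 1 : ℝ) * c k = 0)) ∧
        ∀ c' : Fin L → ℝ,
          ((∑ k : Fin L, c' k = 1) ∧ (∑ k : Fin L, ((k : ℕ) + 1 : ℝ) * c' k = 0)) →
          κ₄ - 1 + quadForm n L θ σ c ≤ κ₄ - 1 + quadForm n L θ σ c') := by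
  have hn₀ : 0 < n := by omega
  refine ⟨fun θ hθ hne hseg k l _ hk _ hl => ?_,
    fun θ₁ θ₂ σ₁ σ₂ hθ₁ hθ₂ hne₁ hne₂ _ _ hseg₁ hseg₂ hratio c => ?_,
    fun θ hθ _ hseg σ _ => ?_⟩
  · have hkl : k + l ≤ cycMinSeg n θ := by omega
    refine ⟨?_, by rw [Gmat_eq_two_mul_max hn₀ hθ hne hkl, Nat.cast_max]⟩
    simpa only [lagSqSum, Nat.cast_add, ← add_assoc] using lagSqSum_eq_mul_Wtv hθ hkl
  · refine sum_congr rfl fun k _ => sum_congr rfl fun l _ => ?_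
    have hkl : (k : ℕ) + 1 + ((l : ℕ) + 1) ≤ 2 * L := by omega
    rw [hratio, Gmat_eq_two_mul_max hn₀ hθ₁ hne₁ (hkl.trans hseg₁),
      Gmat_eq_two_mul_max hn₀ hθ₂ hne₂ (hkl.trans hseg₂)]
  · simpa only [momentConstraint, LinearMap.coe_mk, AddHom.coe_mk, Prod.mk.injEq,
      add_le_add_iff_left] using existsUnique_quadForm_minimizer hθ hL hseg σ

theorem Gmat_structure_and_unique_minimizer
    (n : ℕ) (hn : 2 ≤ n) (L : ℕ) (hL : 2 ≤ L) (κ₄ : ℝ) (hκ : 1 ≤ κ₄) :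
    -- (i)
    (∀ θ : ℤ → ℝ, (∀ i : ℤ, θ (i + n) = θ i) → (∃ i j : ℤ, θ i ≠ θ j) →
      2 * L ≤ cycMinSeg n θ →
      (∀ k l : ℕ, 1 ≤ k → k ≤ L → 1 ≤ l → l ≤ L →
        (∑ i ∈ Finset.range n, (θ (i + 1) - θ (i + 1 + k + l)) ^ 2
            = (k + l) * Wtv n θ) ∧
        Gmat n θ k l = 2 * max k l)) ∧
    -- in particular, the quadratic form depends only on the ratio `W(θ)/(nσ²)`
    (∀ θ₁ θ₂ : ℤ → ℝ, ∀ σ₁ σ₂ : ℝ,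
      (∀ i : ℤ, θ₁ (i + n) = θ₁ i) → (∀ i : ℤ, θ₂ (i + n) = θ₂ i) →
      (∃ i j : ℤ, θ₁ i ≠ θ₁ j) → (∃ i j : ℤ, θ₂ i ≠ θ₂ j) →
      0 < σ₁ → 0 < σ₂ →
      2 * L ≤ cycMinSeg n θ₁ → 2 * L ≤ cycMinSeg n θ₂ →
      Wtv n θ₁ / (n * σ₁ ^ 2) = Wtv n θ₂ / (n * σ₂ ^ 2) →
      ∀ c : Fin L → ℝ, quadForm n L θ₁ σ₁ c = quadForm n L θ₂ σ₂ c) ∧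
    -- (ii) unique minimizer over the affine constraint set
    (∀ θ : ℤ → ℝ, (∀ i : ℤ, θ (i + n) = θ i) → (∃ i j : ℤ, θ i ≠ θ j) →
      L ≤ cycMinSeg n θ → ∀ σ : ℝ, 0 < σ →
      ∃! c : Fin L → ℝ,
        ((∑ k : Fin L, c k = 1) ∧ (∑ k : Fin L, ((k : ℕ) + 1 : ℝ) * c k = 0)) ∧
        ∀ c' : Fin L → ℝ,
          ((∑ k : Fin L, c' k = 1) ∧ (∑ k : Fin L, ((k : ℕ) + 1 : ℝ) * c' k = 0)) →
          κ₄ - 1 + quadForm n L θ σ c ≤ κ₄ - 1 + quadForm n L θ σ c') :=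
  Gmat_structure_and_unique_minimizer_general n hn L hL κ₄
end

section
/- The function g_L is nonnegative and increasing on (0, ∞); it extends continuously to λ = 0 with limit lim_{λ→0⁺} g_L(λ) = κ₄ − 1 + (4L+2)/(L(L−1)); and its right derivative at 0 equals lim_{λ→0⁺} [g_L(λ) − (κ₄ − 1 + (4L+2)/(L(L−1)))]/λ = (L+1)(L+2)(2L+1)/(15L(L−1)). -/
open Matrix Filter

/-- `D_0 = 1`, `D_1 = 1 + λ`, `D_k = (2 + λ) D_{k-1} - D_{k-2}`. -/
noncomputable def Dseq (lam : ℝ) : ℕ → ℝ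
  | 0 => 1
  | 1 => 1 + lam
  | (k + 2) => (2 + lam) * Dseq lam (k + 1) - Dseq lam k

/-- The 2×2 matrix `V_{L,λ}`. -/
noncomputable def Vmat (L : ℕ) (lam : ℝ) : Matrix (Fin 2) (Fin 2) ℝ :=
  !![(1 - Dseq lam (L - 1) / Dseq lam L) / lam,
      (Dseq lam L - 1) / (lam * Dseq lam L);
     (Dseq lam L - 1) / (lam * Dseq lam L),
      (Dseq lam (L - 1) / Dseq lam L + lam * L - 1) / lam ^ 2]

/-- `g_L(λ) = κ₄ - 1 + (V_{L,λ}⁻¹)₁₁`. -/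
noncomputable def gfun (κ₄ : ℝ) (L : ℕ) (lam : ℝ) : ℝ :=
  κ₄ - 1 + (Vmat L lam)⁻¹ 0 0

/-!
Let `C_m(λ)` solve the recursion of `D` with `C_0 = 0`, `C_1 = 1` (a Chebyshev polynomial of the
second kind in `1 + λ/2`), so that `D_k = C_{k+1} - C_k`. With `S_L = ∑ C_m`, `P_L = ∑ m C_m` and
`Q_L = ∑ m (L - m) C_m` (sums over `m ≤ L`) one has `V_{L,λ} = D_L⁻¹ • !![C_L, S_L; S_L, P_L]`, and
the Cassini-type identity `C_L P_L - S_L² = D_L Q_L` gives `(V_{L,λ}⁻¹)₁₁ = P_L / Q_L`.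

For `x < y` the ratio `C_m(y) / C_m(x)` increases with `m`, so a Chebyshev sum inequality for the
weights `m` and `m (L - m)` makes `P_L / Q_L` increasing in `λ`. At `λ = 0` one has `C_m = m` and
`∂C_m/∂λ = (m³ - m)/6`, so the value of `P_L / Q_L` and its derivative at `0` are power sums.
-/
open Finset

noncomputable def Psum (c : ℕ → ℝ) (L : ℕ) : ℝ :=
  ∑ m ∈ range (L + 1), (m : ℝ) * c m

noncomputable def Qsum (c : ℕ → ℝ) (L : ℕ) : ℝ :=
  ∑ m ∈ range (L + 1), (m : ℝ) * (L - m) * c m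

noncomputable def Ssum (c : ℕ → ℝ) (L : ℕ) : ℝ :=
  ∑ m ∈ range (L + 1), c m

lemma Psum_succ (c : ℕ → ℝ) (L : ℕ) : Psum c (L + 1) = Psum c L + (L + 1) * c (L + 1) := by
  rw [Psum, sum_range_succ]; push_cast; rfl

lemma Ssum_succ (c : ℕ → ℝ) (L : ℕ) : Ssum c (L + 1) = Ssum c L + c (L + 1) :=
  sum_range_succ _ _

lemma Qsum_succ (c : ℕ → ℝ) (L : ℕ) : Qsum c (L + 1) = Qsum c L + Psum c L := by
  rw [Qsum, sum_range_succ, Qsum, Psum, ← sum_add_distrib]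
  push_cast
  rw [sub_self, mul_zero, zero_mul, add_zero]
  exact sum_congr rfl fun m _ => by ring

lemma two_mul_Psum_mul_Qsum_sub (a b : ℕ → ℝ) (L : ℕ) :
    2 * (Psum b L * Qsum a L - Psum a L * Qsum b L)
      = ∑ m ∈ range (L + 1), ∑ n ∈ range (L + 1),
          (m : ℝ) * n * (m - n) * (a n * b m - a m * b n) := by
  set r := range (L + 1)
  have hdiff : Psum b L * Qsum a L - Psum a L * Qsum b L
      = ∑ m ∈ r, ∑ n ∈ r, (m : ℝ) * n * (m - n) * (a n * b m) := by
    rw [Psum, Psum, Qsum, Qsum, sum_mul_sum, sum_mul_sum]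
    nth_rewrite 2 [sum_comm]
    rw [← sum_sub_distrib]
    refine sum_congr rfl fun m _ => ?_
    rw [← sum_sub_distrib]
    exact sum_congr rfl fun n _ => by ring
  have hswap : ∑ m ∈ r, ∑ n ∈ r, (m : ℝ) * n * (m - n) * (a m * b n)
      = -∑ m ∈ r, ∑ n ∈ r, (m : ℝ) * n * (m - n) * (a n * b m) := by
    rw [sum_comm]
    simp only [← sum_neg_distrib]
    exact sum_congr rfl fun m _ => sum_congr rfl fun n _ => by ring
  calc 2 * (Psum b L * Qsum a L - Psum a L * Qsum b L)
      = ∑ m ∈ r, ∑ n ∈ r, (m : ℝ) * n * (m - n) * (a n * b m)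
        - ∑ m ∈ r, ∑ n ∈ r, (m : ℝ) * n * (m - n) * (a m * b n) := by rw [hswap, hdiff]; ring
    _ = _ := by
      rw [← sum_sub_distrib]
      refine sum_congr rfl fun m _ => ?_
      rw [← sum_sub_distrib]
      exact sum_congr rfl fun n _ => by ring

section WeightedSums

variable {c : ℕ → ℝ} {L : ℕ}

lemma Psum_pos (hc : ∀ m, 0 ≤ c m) (hc₁ : 0 < c 1) (hL : 1 ≤ L) : 0 < Psum c L :=
  sum_pos' (fun m _ => mul_nonneg m.cast_nonneg (hc m))
    ⟨1, mem_range.mpr (by omega), by simpa using hc₁⟩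

lemma Qsum_pos (hc : ∀ m, 0 ≤ c m) (hc₁ : 0 < c 1) (hL : 2 ≤ L) : 0 < Qsum c L := by
  have hL' : (2 : ℝ) ≤ L := by exact_mod_cast hL
  refine sum_pos' (fun m hm => ?_) ⟨1, mem_range.mpr (by omega), ?_⟩
  · have hmL : (m : ℝ) ≤ L := by exact_mod_cast Nat.lt_succ_iff.mp (mem_range.mp hm)
    exact mul_nonneg (mul_nonneg m.cast_nonneg (by linarith)) (hc m)
  · push_cast
    exact mul_pos (by linarith) hc₁

lemma Psum_mul_Qsum_lt {a b : ℕ → ℝ} (hL : 2 ≤ L)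
    (hab : ∀ n m, 1 ≤ n → n < m → m ≤ L → a m * b n < a n * b m) :
    Psum a L * Qsum b L < Psum b L * Qsum a L := by
  set r := range (L + 1)
  set T : ℕ → ℕ → ℝ := fun m n => (m : ℝ) * n * (m - n) * (a n * b m - a m * b n) with hT_def
  have hT_of_lt : ∀ m n, n < m → m ≤ L → 0 ≤ T m n := by
    intro m n hnm hmL
    rcases Nat.eq_zero_or_pos n with rfl | hn
    · simp [hT_def]
    · have hnm' : (n : ℝ) < m := by exact_mod_cast hnm
      exact mul_nonneg (mul_nonneg (by positivity) (by linarith))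
        (by linarith [hab n m hn hnm hmL])
  have hT : ∀ m ∈ r, ∀ n ∈ r, 0 ≤ T m n := by
    intro m hm n hn
    have hm := Nat.lt_succ_iff.mp (mem_range.mp hm)
    have hn := Nat.lt_succ_iff.mp (mem_range.mp hn)
    rcases lt_trichotomy m n with h | rfl | h
    · have hsymm : T m n = T n m := by simp only [hT_def]; ring
      exact hsymm ▸ hT_of_lt n m h hn
    · simp [hT_def]
    · exact hT_of_lt m n h hm
  have hT21 : 0 < T 2 1 := by
    have := hab 1 2 le_rfl one_lt_two hL
    norm_num [hT_def]
    linarith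
  have hmem : ∀ k, k ≤ 2 → k ∈ r := fun k hk => mem_range.mpr (by omega)
  have hpos : 0 < ∑ m ∈ r, ∑ n ∈ r, T m n :=
    calc 0 < T 2 1 := hT21
      _ ≤ ∑ n ∈ r, T 2 n := single_le_sum (hT 2 (hmem 2 le_rfl)) (hmem 1 one_le_two)
      _ ≤ ∑ m ∈ r, ∑ n ∈ r, T m n :=
        single_le_sum (f := fun m => ∑ n ∈ r, T m n)
          (fun m hm => sum_nonneg (hT m hm)) (hmem 2 le_rfl)
  linarith [two_mul_Psum_mul_Qsum_sub a b L]

end WeightedSums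

section Derivatives

variable {c : ℝ → ℕ → ℝ} {c' : ℕ → ℝ} {x : ℝ}

lemma hasDerivAt_Psum (L : ℕ) (hc : ∀ m, HasDerivAt (fun t => c t m) (c' m) x) :
    HasDerivAt (fun t => Psum (c t) L) (Psum c' L) x :=
  HasDerivAt.fun_sum fun m _ => (hc m).const_mul _

lemma hasDerivAt_Qsum (L : ℕ) (hc : ∀ m, HasDerivAt (fun t => c t m) (c' m) x) :
    HasDerivAt (fun t => Qsum (c t) L) (Qsum c' L) x :=
  HasDerivAt.fun_sum fun m _ => (hc m).const_mul _

end Derivatives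

lemma Psum_natCast (L : ℕ) : Psum (fun m => (m : ℝ)) L = L * (L + 1) * (2 * L + 1) / 6 := by
  induction L with
  | zero => simp [Psum]
  | succ k ih => rw [Psum_succ, ih]; push_cast; ring

lemma Qsum_natCast (L : ℕ) : Qsum (fun m => (m : ℝ)) L = L ^ 2 * (L + 1) * (L - 1) / 12 := by
  induction L with
  | zero => simp [Qsum]
  | succ k ih => rw [Qsum_succ, ih, Psum_natCast]; push_cast; ring

lemma Psum_tetrahedral (L : ℕ) :
    Psum (fun m => ((m : ℝ) ^ 3 - m) / 6) L
      = L * (L + 1) * (2 * L + 1) * (L + 2) * (L - 1) / 60 := by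
  induction L with
  | zero => simp [Psum]
  | succ k ih => rw [Psum_succ, ih]; push_cast; ring

lemma Qsum_tetrahedral (L : ℕ) :
    Qsum (fun m => ((m : ℝ) ^ 3 - m) / 6) L
      = L ^ 2 * (L + 1) * (L + 2) * (L - 1) * (L - 2) / 180 := by
  induction L with
  | zero => simp [Qsum]
  | succ k ih => rw [Qsum_succ, ih, Psum_tetrahedral]; push_cast; ring

noncomputable def Cseq (lam : ℝ) : ℕ → ℝ
  | 0 => 0
  | 1 => 1
  | (k + 2) => (2 + lam) * Cseq lam (k + 1) - Cseq lam k

lemma Cseq_add_two (lam : ℝ) (k : ℕ) :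
    Cseq lam (k + 2) = (2 + lam) * Cseq lam (k + 1) - Cseq lam k := rfl

section Cseq

variable {lam : ℝ}

lemma Cseq_zero_left (m : ℕ) : Cseq 0 m = m := by
  induction m using Nat.twoStepInduction with
  | zero => simp [Cseq]
  | one => simp [Cseq]
  | more k ih₀ ih₁ => rw [Cseq_add_two, ih₀, ih₁]; push_cast; ring

lemma hasDerivAt_Cseq (m : ℕ) :
    HasDerivAt (fun lam => Cseq lam m) (((m : ℝ) ^ 3 - m) / 6) 0 := by
  induction m using Nat.twoStepInduction with
  | zero => simpa [Cseq] using hasDerivAt_const (0 : ℝ) (0 : ℝ)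
  | one => simpa [Cseq] using hasDerivAt_const (0 : ℝ) (1 : ℝ)
  | more k ih₀ ih₁ =>
    refine ((((hasDerivAt_id' (0 : ℝ)).const_add 2).fun_mul ih₁).fun_sub ih₀).congr_deriv ?_
    rw [Cseq_zero_left]
    push_cast
    ring

lemma natCast_le_Cseq (hlam : 0 ≤ lam) (m : ℕ) : (m : ℝ) ≤ Cseq lam m := by
  have hgrowth : ∀ m : ℕ, (m : ℝ) ≤ Cseq lam m ∧ Cseq lam m + 1 ≤ Cseq lam (m + 1) := by
    intro m
    induction m with
    | zero => simp [Cseq]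
    | succ k ih =>
      refine ⟨by push_cast; linarith [ih.1, ih.2], ?_⟩
      rw [Cseq_add_two]
      nlinarith [ih.1, ih.2, k.cast_nonneg (α := ℝ)]
  exact (hgrowth m).1

lemma Cseq_nonneg (hlam : 0 ≤ lam) (m : ℕ) : 0 ≤ Cseq lam m :=
  m.cast_nonneg.trans (natCast_le_Cseq hlam m)

lemma Cseq_pos (hlam : 0 ≤ lam) {m : ℕ} (hm : 1 ≤ m) : 0 < Cseq lam m :=
  lt_of_lt_of_le (by exact_mod_cast hm) (natCast_le_Cseq hlam m)

-- The Wronskian `C_{k+1}(y) C_k(x) - C_k(y) C_{k+1}(x)` grows by `(y - x) C_{k+1}(y) C_{k+1}(x)`.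
lemma Cseq_mul_Cseq_succ_lt {x y : ℝ} (hx : 0 ≤ x) (hxy : x < y) {k : ℕ} (hk : 1 ≤ k) :
    Cseq y k * Cseq x (k + 1) < Cseq y (k + 1) * Cseq x k := by
  induction k, hk using Nat.le_induction with
  | base => norm_num [Cseq]; linarith
  | succ k hk ih =>
    have hxk := Cseq_pos hx (by omega : 1 ≤ k + 1)
    have hyk := Cseq_pos (hx.trans hxy.le) (by omega : 1 ≤ k + 1)
    have hstep := mul_pos (sub_pos.mpr hxy) (mul_pos hyk hxk)
    rw [Cseq_add_two x, Cseq_add_two y]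
    linear_combination ih + hstep

lemma strictMono_Cseq_div {x y : ℝ} (hx : 0 ≤ x) (hxy : x < y) :
    StrictMono fun k => Cseq y (k + 1) / Cseq x (k + 1) := by
  refine strictMono_nat_of_lt_succ fun k => ?_
  rw [div_lt_div_iff₀ (Cseq_pos hx (by omega)) (Cseq_pos hx (by omega))]
  exact Cseq_mul_Cseq_succ_lt hx hxy (by omega)

lemma Cseq_mul_Cseq_lt {x y : ℝ} (hx : 0 ≤ x) (hxy : x < y) {n m : ℕ} (hn : 1 ≤ n)
    (hnm : n < m) :
    Cseq x m * Cseq y n < Cseq x n * Cseq y m := by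
  obtain ⟨n, rfl⟩ := Nat.exists_eq_add_of_le' hn
  obtain ⟨m, rfl⟩ := Nat.exists_eq_add_of_le' (hn.trans hnm.le)
  have h := strictMono_Cseq_div hx hxy (Nat.succ_lt_succ_iff.mp hnm)
  rwa [div_lt_div_iff₀ (Cseq_pos hx (by omega)) (Cseq_pos hx (by omega)), mul_comm (Cseq y _),
    mul_comm (Cseq y _)] at h

end Cseq

section Identities

variable (lam : ℝ)

lemma Dseq_eq_Cseq_sub (k : ℕ) : Dseq lam k = Cseq lam (k + 1) - Cseq lam k := by
  induction k using Nat.twoStepInduction with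
  | zero => simp [Dseq, Cseq]
  | one => simp [Dseq, Cseq]; ring
  | more k ih₀ ih₁ =>
    rw [Dseq, ih₀, ih₁, Cseq_add_two lam (k + 1), Cseq_add_two lam k]
    ring

lemma Dseq_succ_sub (k : ℕ) : Dseq lam (k + 1) - Dseq lam k = lam * Cseq lam (k + 1) := by
  rw [Dseq_eq_Cseq_sub, Dseq_eq_Cseq_sub, Cseq_add_two]
  ring

lemma Dseq_eq_one_add (L : ℕ) : Dseq lam L = 1 + lam * Ssum (Cseq lam) L := by
  induction L with
  | zero => simp [Dseq, Ssum, Cseq]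
  | succ k ih => rw [Ssum_succ]; linear_combination ih + Dseq_succ_sub lam k

lemma mul_Psum_Cseq (L : ℕ) :
    lam * Psum (Cseq lam) L = L * Cseq lam (L + 1) - (L + 1) * Cseq lam L := by
  induction L with
  | zero => simp [Psum, Cseq]
  | succ k ih =>
    rw [Psum_succ, Cseq_add_two]
    push_cast
    linear_combination ih

lemma mul_Qsum_Cseq_succ (L : ℕ) :
    lam * Qsum (Cseq lam) (L + 1) + 2 * Ssum (Cseq lam) L = L * Cseq lam (L + 1) := by
  induction L with
  | zero => simp [Qsum, Ssum, Cseq, sum_range_succ]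
  | succ k ih =>
    have h := mul_Psum_Cseq lam (k + 1)
    rw [Qsum_succ, Ssum_succ]
    push_cast at h ⊢
    linear_combination ih + h

lemma Cseq_mul_Psum_sub_sq (L : ℕ) :
    Cseq lam L * Psum (Cseq lam) L - Ssum (Cseq lam) L ^ 2 = Dseq lam L * Qsum (Cseq lam) L := by
  induction L with
  | zero => simp [Cseq, Psum, Qsum, Ssum]
  | succ k ih =>
    rw [Dseq_eq_Cseq_sub] at ih ⊢
    rw [Psum_succ, Ssum_succ, Qsum_succ, Cseq_add_two]
    linear_combination ih - Cseq lam (k + 1) * mul_Qsum_Cseq_succ lam k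
      + lam * Cseq lam (k + 1) * Qsum_succ (Cseq lam) k

end Identities

lemma Dseq_pos {lam : ℝ} (hlam : 0 ≤ lam) (L : ℕ) : 0 < Dseq lam L := by
  rw [Dseq_eq_one_add]
  exact add_pos_of_pos_of_nonneg one_pos
    (mul_nonneg hlam (sum_nonneg fun m _ => Cseq_nonneg hlam m))

lemma Matrix.inv_apply_zero_zero_fin_two {K : Type*} [Field K] (A : Matrix (Fin 2) (Fin 2) K) :
    A⁻¹ 0 0 = A 1 1 / A.det := by
  rw [Matrix.inv_def, Matrix.adjugate_fin_two, Ring.inverse_eq_inv', Matrix.smul_apply]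
  simp [div_eq_inv_mul]

lemma Vmat_eq_smul {k : ℕ} {lam : ℝ} (hlam : lam ≠ 0) (hD : Dseq lam (k + 1) ≠ 0) :
    Vmat (k + 1) lam = (Dseq lam (k + 1))⁻¹ •
      !![Cseq lam (k + 1), Ssum (Cseq lam) (k + 1);
         Ssum (Cseq lam) (k + 1), Psum (Cseq lam) (k + 1)] := by
  have h₀₀ := Dseq_succ_sub lam k
  have h₀₁ := Dseq_eq_one_add lam (k + 1)
  have h₁₁ : Dseq lam k + (lam * (k + 1) - 1) * Dseq lam (k + 1)
      = lam ^ 2 * Psum (Cseq lam) (k + 1) := by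
    have h := mul_Psum_Cseq lam (k + 1)
    rw [Dseq_eq_Cseq_sub, Dseq_eq_Cseq_sub]
    push_cast at h
    linear_combination (-lam) * h - Cseq_add_two lam k
  ext i j
  fin_cases i <;> fin_cases j <;> simp [Vmat] <;> field_simp
  · linear_combination h₀₀
  · linear_combination h₀₁
  · linear_combination h₀₁
  · linear_combination h₁₁

lemma Vmat_inv_apply_zero_zero {L : ℕ} (hL : 1 ≤ L) {lam : ℝ} (hlam : 0 < lam) :
    (Vmat L lam)⁻¹ 0 0 = Psum (Cseq lam) L / Qsum (Cseq lam) L := by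
  obtain ⟨k, rfl⟩ := Nat.exists_eq_add_of_le' hL
  have hD := (Dseq_pos hlam.le (k + 1)).ne'
  rw [Matrix.inv_apply_zero_zero_fin_two, Vmat_eq_smul hlam.ne' hD, Matrix.det_smul,
    Matrix.det_fin_two_of, ← sq, Cseq_mul_Psum_sub_sq]
  simp [field]

noncomputable def pqRatio (L : ℕ) (lam : ℝ) : ℝ :=
  Psum (Cseq lam) L / Qsum (Cseq lam) L

section pqRatio

variable {L : ℕ}

lemma gfun_eq_pqRatio (κ₄ : ℝ) (hL : 1 ≤ L) {lam : ℝ} (hlam : 0 < lam) :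
    gfun κ₄ L lam = κ₄ - 1 + pqRatio L lam := by
  rw [gfun, Vmat_inv_apply_zero_zero hL hlam, pqRatio]

lemma Qsum_Cseq_pos (hL : 2 ≤ L) {lam : ℝ} (hlam : 0 ≤ lam) : 0 < Qsum (Cseq lam) L :=
  Qsum_pos (Cseq_nonneg hlam) (Cseq_pos hlam le_rfl) hL

lemma pqRatio_pos (hL : 2 ≤ L) {lam : ℝ} (hlam : 0 ≤ lam) : 0 < pqRatio L lam :=
  div_pos (Psum_pos (Cseq_nonneg hlam) (Cseq_pos hlam le_rfl) (by omega)) (Qsum_Cseq_pos hL hlam)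

lemma pqRatio_strictMonoOn (hL : 2 ≤ L) : StrictMonoOn (pqRatio L) (Set.Ici 0) := by
  intro x hx y hy hxy
  rw [pqRatio, pqRatio, div_lt_div_iff₀ (Qsum_Cseq_pos hL hx) (Qsum_Cseq_pos hL hy)]
  exact Psum_mul_Qsum_lt hL fun n m hn hnm _ => Cseq_mul_Cseq_lt hx hxy hn hnm

lemma pqRatio_zero (hL : 2 ≤ L) : pqRatio L 0 = (4 * L + 2) / (L * (L - 1)) := by
  have hL' : (2 : ℝ) ≤ L := by exact_mod_cast hL
  rw [pqRatio, funext Cseq_zero_left, Psum_natCast, Qsum_natCast]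
  field_simp
  ring

lemma hasDerivAt_pqRatio (hL : 2 ≤ L) :
    HasDerivAt (pqRatio L) ((L + 1) * (L + 2) * (2 * L + 1) / (15 * L * (L - 1))) 0 := by
  have hL' : (2 : ℝ) ≤ L := by exact_mod_cast hL
  refine ((hasDerivAt_Psum L hasDerivAt_Cseq).div (hasDerivAt_Qsum L hasDerivAt_Cseq)
    (Qsum_Cseq_pos hL le_rfl).ne').congr_deriv ?_
  rw [funext Cseq_zero_left, Psum_natCast, Qsum_natCast, Psum_tetrahedral, Qsum_tetrahedral]
  field_simp
  ring

end pqRatio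

theorem gfun_monotone_limit_derivative
    (κ₄ : ℝ) (hκ : 1 ≤ κ₄) (L : ℕ) (hL : 2 ≤ L) :
    (∀ lam : ℝ, 0 < lam → 0 ≤ gfun κ₄ L lam) ∧
    StrictMonoOn (gfun κ₄ L) (Set.Ioi (0 : ℝ)) ∧
    Tendsto (gfun κ₄ L) (nhdsWithin 0 (Set.Ioi (0 : ℝ)))
      (nhds (κ₄ - 1 + (4 * L + 2) / (L * (L - 1)))) ∧
    Tendsto (fun lam => (gfun κ₄ L lam - (κ₄ - 1 + (4 * L + 2) / (L * (L - 1)))) / lam)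
      (nhdsWithin 0 (Set.Ioi (0 : ℝ)))
      (nhds ((L + 1) * (L + 2) * (2 * L + 1) / (15 * L * (L - 1)))) := by
  have hg : ∀ lam : ℝ, 0 < lam → gfun κ₄ L lam = κ₄ - 1 + pqRatio L lam :=
    fun _ => gfun_eq_pqRatio κ₄ (by omega)
  have hderiv := hasDerivAt_pqRatio hL
  rw [← pqRatio_zero hL]
  refine ⟨fun lam hlam => ?_, fun x hx y hy hxy => ?_, ?_, ?_⟩
  · rw [hg lam hlam]
    linarith [pqRatio_pos hL hlam.le]
  · rw [hg x hx, hg y hy, add_lt_add_iff_left]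
    exact pqRatio_strictMonoOn hL (Set.Ioi_subset_Ici_self hx) (Set.Ioi_subset_Ici_self hy) hxy
  · refine ((hderiv.continuousAt.tendsto.mono_left nhdsWithin_le_nhds).const_add _).congr' ?_
    filter_upwards [self_mem_nhdsWithin] with lam hlam using (hg lam hlam).symm
  · refine hderiv.tendsto_slope_zero_right.congr' ?_
    filter_upwards [self_mem_nhdsWithin] with lam hlam
    rw [hg lam hlam, zero_add, smul_eq_mul]
    ring
end

section
/- Let λ ≥ 0. (i) The determinants D_k := det(I_k + λ·U_k^⊤U_k) satisfy the recursion D_k = (2 + λ)D_{k−1} − D_{k−2} for all k ≥ 3, with D_1 = 1 + λ and D_2 = (2 + λ)(1 + λ) − 1 (equivalently, the recursion holds for k ≥ 2 with the convention D_0 = 1). (ii) For every k ≥ 2, the matrix I_k + λ·U_k^⊤U_k is invertible, its (1, k) inverse entry equals −λ/D_k (equivalently, the (1,k) cofactor of I_k + λ·U_k^⊤U_k equals −λ), and its (k, k) inverse entry equals D_{k−1}/D_k. -/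
open Matrix

/-- The `k × k` upper triangular matrix with ones on and above the diagonal. -/
def Umat (k : ℕ) : Matrix (Fin k) (Fin k) ℝ :=
  fun i j => if i ≤ j then 1 else 0

/-- `D_k = det(I_k + λ U_kᵀ U_k)` (equal to `1` for `k = 0`). -/
noncomputable def Ddet (lam : ℝ) (k : ℕ) : ℝ :=
  ((1 : Matrix (Fin k) (Fin k) ℝ) + lam • ((Umat k)ᵀ * Umat k)).det

/-!
The `(i, j)` entry of `M_k = I + λ UᵀU` is `δᵢⱼ + λ (min i j + 1)`, so `M_{k-1}` is the
leading block of `M_k`. Subtracting the second-to-last row and then column from the last ones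
leaves that block bordered by `(0, …, 0, -1, 2 + λ)`, and expanding along the border gives
`D_k = (2 + λ) D_{k-1} - D_{k-2}`, or equivalently `D_{i+1} = D_i + λ ∑_{j ≤ i} D_j`; in
particular `D_k ≥ 1` for `λ ≥ 0`.

For the inverse, let `w_i = D_i - D_{i+1}` (with `D_k` read as `0`). Then `U w = (D_i)_i` by
telescoping, so `(M_k w)_i = w_i + λ ∑_{j ≤ i} D_j`, which the identity above collapses to
`D_k δ_{i, k-1}`. Hence `w / D_k` is the last column of `M_k⁻¹`, with first entry `-λ / D_k`
and last entry `D_{k-1} / D_k`.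
-/

open Finset

theorem Matrix.det_succ_succ_of_border {R : Type*} [CommRing R] {n : ℕ}
    (A : Matrix (Fin (n + 2)) (Fin (n + 2)) R)
    (hrow : ∀ j : Fin n, A (Fin.last _) j.castSucc.castSucc = 0)
    (hcol : ∀ i : Fin n, A i.castSucc.castSucc (Fin.last _) = 0) :
    A.det = A (Fin.last _) (Fin.last _) * (A.submatrix Fin.castSucc Fin.castSucc).det -
      A (Fin.last _) (Fin.last n).castSucc * A (Fin.last n).castSucc (Fin.last _) *
        ((A.submatrix Fin.castSucc Fin.castSucc).submatrix Fin.castSucc Fin.castSucc).det := by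
  rw [det_succ_row _ (Fin.last _), Fin.sum_univ_castSucc, Fin.sum_univ_castSucc]
  simp only [hrow, mul_zero, zero_mul, sum_const_zero, zero_add, Fin.succAbove_last]
  rw [det_succ_column _ (Fin.last n), Fin.sum_univ_castSucc]
  have hsucc : (Fin.last n).castSucc.succAbove ∘ Fin.castSucc = Fin.castSucc ∘ Fin.castSucc :=
    funext fun i => Fin.succAbove_of_castSucc_lt _ _
      (Fin.castSucc_lt_castSucc_iff.2 i.castSucc_lt_last)
  simp only [Fin.val_last, Fin.val_castSucc, odd_add_one_self, Odd.neg_one_pow, neg_mul, one_mul,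
    submatrix_apply, ne_eq, Fin.castSucc_ne_last, not_false_eq_true, Fin.succAbove_ne_last_last,
    hcol, mul_zero, Fin.succAbove_last, submatrix_submatrix, hsucc, zero_mul, sum_const_zero,
    Even.add_self, Even.neg_pow, one_pow, zero_add]
  ring

theorem Matrix.inv_apply_mul_of_mulVec_eq_single {n R : Type*} [Fintype n] [DecidableEq n]
    [CommRing R] {A : Matrix n n R} (hA : IsUnit A.det) {w : n → R} {j : n} {c : R}
    (h : A *ᵥ w = Pi.single j c) (i : n) : A⁻¹ i j * c = w i := by
  have hw : A⁻¹ *ᵥ Pi.single j c = w := by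
    rw [← h, mulVec_mulVec, nonsing_inv_mul _ hA, one_mulVec]
  rw [← hw, mulVec_single]
  rfl

theorem transpose_Umat_mul_Umat_apply {k : ℕ} (i j : Fin k) :
    ((Umat k)ᵀ * Umat k) i j = min (i : ℕ) j + 1 := by
  have hfilter : ({l | l ≤ j ∧ l ≤ i} : Finset (Fin k)) = Iic (min i j) := by
    ext; simp [and_comm]
  simp [mul_apply, Umat, ← ite_and, sum_boole, hfilter]

theorem Umat_mulVec_sub_succ {k : ℕ} (f : ℕ → ℝ) (hf : f k = 0) :
    Umat k *ᵥ (fun i : Fin k => f i - f (i + 1)) = fun i : Fin k => f i := by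
  ext i
  have hfilter : (range k).filter (fun j => (i : ℕ) ≤ j) = Ico (i : ℕ) k := by
    ext; simp [and_comm]
  simp only [mulVec, dotProduct, Umat, Fin.le_def, ite_mul, one_mul, zero_mul]
  rw [Fin.sum_univ_eq_sum_range (fun j => if (i : ℕ) ≤ j then f j - f (j + 1) else 0),
    ← sum_filter, hfilter]
  have htelescope := sum_Ico_sub f i.isLt.le
  rw [sum_sub_distrib] at htelescope ⊢
  linarith

theorem transpose_Umat_mulVec {k : ℕ} (y : ℕ → ℝ) :
    (Umat k)ᵀ *ᵥ (fun j : Fin k => y j) = fun i : Fin k => ∑ j ∈ range (i + 1), y j := by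
  ext i
  have hfilter : (range k).filter (fun j => j ≤ (i : ℕ)) = range (i + 1) := by
    ext j
    simp only [mem_filter, mem_range]
    omega
  simp only [mulVec, dotProduct, transpose_apply, Umat, Fin.le_def, ite_mul, one_mul, zero_mul]
  rw [Fin.sum_univ_eq_sum_range (fun j => if j ≤ (i : ℕ) then y j else 0), ← sum_filter,
    hfilter]

def Mmat (lam : ℝ) (k : ℕ) : Matrix (Fin k) (Fin k) ℝ :=
  1 + lam • ((Umat k)ᵀ * Umat k)

theorem Ddet_eq_det_Mmat (lam : ℝ) (k : ℕ) : Ddet lam k = (Mmat lam k).det := rfl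

theorem Mmat_apply (lam : ℝ) {k : ℕ} (i j : Fin k) :
    Mmat lam k i j = (if (i : ℕ) = j then 1 else 0) + lam * (min (i : ℕ) j + 1) := by
  simp [Mmat, one_apply, Fin.val_inj, transpose_Umat_mul_Umat_apply]

theorem Mmat_submatrix_castSucc (lam : ℝ) (k : ℕ) :
    (Mmat lam (k + 1)).submatrix Fin.castSucc Fin.castSucc = Mmat lam k := by
  ext i j
  simp [Mmat_apply]

theorem Ddet_zero (lam : ℝ) : Ddet lam 0 = 1 := det_isEmpty

theorem Ddet_one (lam : ℝ) : Ddet lam 1 = 1 + lam := by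
  simp [Ddet_eq_det_Mmat, Mmat_apply]

theorem Ddet_succ_succ (lam : ℝ) (n : ℕ) :
    Ddet lam (n + 2) = (2 + lam) * Ddet lam (n + 1) - Ddet lam n := by
  set M := Mmat lam (n + 2)
  set l : Fin (n + 2) := Fin.last (n + 1)
  set p : Fin (n + 2) := (Fin.last n).castSucc
  have hne : l ≠ p := (Fin.castSucc_ne_last _).symm
  set B₁ := M.updateRow l (M l + (-1 : ℝ) • M p)
  set B := B₁.updateCol l (fun i => B₁ i l + (-1 : ℝ) • B₁ i p)
  have hdet : B.det = M.det := by
    rw [det_updateCol_add_smul_self _ hne, det_updateRow_add_smul_self _ hne]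
  have hblock : B.submatrix Fin.castSucc Fin.castSucc = Mmat lam (n + 1) := by
    ext i j
    simp [B, B₁, l, Fin.castSucc_ne_last, M, ← Mmat_submatrix_castSucc lam (n + 1)]
  have hrow : ∀ j : Fin n, B l j.castSucc.castSucc = 0 := by
    intro j
    have hj : (j : ℕ) < n := j.isLt
    simp [B, B₁, l, p, M, Mmat_apply, Nat.min_eq_right (by omega : (j : ℕ) ≤ n + 1), hj.ne',
      show n + 1 ≠ (j : ℕ) by omega]
  have hcol : ∀ i : Fin n, B i.castSucc.castSucc l = 0 := by
    intro i
    have hi : (i : ℕ) < n := i.isLt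
    simp [B, B₁, l, p, M, Mmat_apply, Nat.min_eq_left (by omega : (i : ℕ) ≤ n + 1), hi.ne,
      show (i : ℕ) ≠ n + 1 by omega]
  have hll : B l l = 2 + lam := by
    simp only [B, B₁, M, l, p, updateCol_self, updateRow_self, Pi.add_apply, Pi.smul_apply,
      smul_eq_mul, Mmat_apply, Fin.val_last, Fin.val_castSucc, min_self, if_true,
      if_neg n.succ_ne_self, if_neg (n.succ_ne_self).symm, Nat.min_eq_left n.le_succ,
      Nat.min_eq_right n.le_succ]
    push_cast
    ring
  have hlp : B l p = -1 := by simp [B, B₁, l, p, M, Mmat_apply]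
  have hpl : B p l = -1 := by simp [B, B₁, l, p, M, Mmat_apply]
  rw [Ddet_eq_det_Mmat, ← hdet, B.det_succ_succ_of_border hrow hcol, hblock,
    Mmat_submatrix_castSucc, hll, hlp, hpl, Ddet_eq_det_Mmat, Ddet_eq_det_Mmat]
  ring

theorem Ddet_succ_eq_add_mul_sum (lam : ℝ) (i : ℕ) :
    Ddet lam (i + 1) = Ddet lam i + lam * ∑ j ∈ range (i + 1), Ddet lam j := by
  induction i with
  | zero => simp [Ddet_zero, Ddet_one]
  | succ i ih =>
    rw [Ddet_succ_succ, sum_range_succ]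
    linear_combination ih

theorem one_le_Ddet {lam : ℝ} (hlam : 0 ≤ lam) (k : ℕ) : 1 ≤ Ddet lam k := by
  induction k using Nat.strong_induction_on with
  | _ k ih =>
    rcases k with _ | i
    · rw [Ddet_zero]
    · have hsum : 0 ≤ ∑ j ∈ range (i + 1), Ddet lam j :=
        sum_nonneg fun j hj => zero_le_one.trans (ih j (by simpa using hj))
      rw [Ddet_succ_eq_add_mul_sum]
      nlinarith [ih i i.lt_succ_self]

theorem isUnit_det_Mmat {lam : ℝ} (hlam : 0 ≤ lam) (k : ℕ) : IsUnit (Mmat lam k).det :=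
  (zero_lt_one.trans_le (one_le_Ddet hlam k)).ne'.isUnit

noncomputable def truncDdet (lam : ℝ) (k j : ℕ) : ℝ := if j < k then Ddet lam j else 0

theorem Mmat_mulVec_sub_truncDdet (lam : ℝ) (k : ℕ) :
    Mmat lam (k + 1) *ᵥ
        (fun i : Fin (k + 1) => truncDdet lam (k + 1) i - truncDdet lam (k + 1) (i + 1)) =
      Pi.single (Fin.last k) (Ddet lam (k + 1)) := by
  rw [Mmat, add_mulVec, one_mulVec, smul_mulVec, ← mulVec_mulVec,
    Umat_mulVec_sub_succ _ (by simp [truncDdet]), transpose_Umat_mulVec]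
  ext i
  have hsum :
      lam * ∑ j ∈ range (i + 1), truncDdet lam (k + 1) j = Ddet lam (i + 1) - Ddet lam i := by
    rw [Ddet_succ_eq_add_mul_sum, add_sub_cancel_left]
    refine congrArg _ (sum_congr rfl fun j hj => if_pos ?_)
    have := mem_range.1 hj
    omega
  rw [Pi.add_apply, Pi.smul_apply, smul_eq_mul, hsum]
  simp only [truncDdet, if_pos i.isLt]
  rcases Fin.eq_castSucc_or_eq_last i with ⟨i, rfl⟩ | rfl
  · simp [Fin.castSucc_ne_last]
  · simp

theorem Mmat_inv_zero_last {lam : ℝ} (hlam : 0 ≤ lam) (m : ℕ) :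
    (Mmat lam (m + 2))⁻¹ 0 (Fin.last (m + 1)) = -lam / Ddet lam (m + 2) := by
  have h := inv_apply_mul_of_mulVec_eq_single (isUnit_det_Mmat hlam _)
    (Mmat_mulVec_sub_truncDdet lam (m + 1)) 0
  rw [eq_div_iff (zero_lt_one.trans_le (one_le_Ddet hlam _)).ne', h]
  simp [truncDdet, Ddet_zero, Ddet_one]

theorem Mmat_inv_last_last {lam : ℝ} (hlam : 0 ≤ lam) (k : ℕ) :
    (Mmat lam (k + 1))⁻¹ (Fin.last k) (Fin.last k) = Ddet lam k / Ddet lam (k + 1) := by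
  have h := inv_apply_mul_of_mulVec_eq_single (isUnit_det_Mmat hlam _)
    (Mmat_mulVec_sub_truncDdet lam k) (Fin.last k)
  rw [eq_div_iff (zero_lt_one.trans_le (one_le_Ddet hlam _)).ne', h]
  simp [truncDdet]

theorem Ddet_recursion_and_inverse_entries
    (lam : ℝ) (hlam : 0 ≤ lam) :
    (Ddet lam 0 = 1) ∧
    (Ddet lam 1 = 1 + lam) ∧
    (Ddet lam 2 = (2 + lam) * (1 + lam) - 1) ∧
    (∀ k : ℕ, 2 ≤ k →
      Ddet lam k = (2 + lam) * Ddet lam (k - 1) - Ddet lam (k - 2)) ∧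
    (∀ k : ℕ, (hk : 2 ≤ k) →
      IsUnit ((1 : Matrix (Fin k) (Fin k) ℝ) + lam • ((Umat k)ᵀ * Umat k)).det ∧
      ((1 : Matrix (Fin k) (Fin k) ℝ) + lam • ((Umat k)ᵀ * Umat k))⁻¹
          ⟨0, by omega⟩ ⟨k - 1, by omega⟩ = -lam / Ddet lam k ∧
      ((1 : Matrix (Fin k) (Fin k) ℝ) + lam • ((Umat k)ᵀ * Umat k))⁻¹
          ⟨k - 1, by omega⟩ ⟨k - 1, by omega⟩ = Ddet lam (k - 1) / Ddet lam k) := by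
  refine ⟨Ddet_zero lam, Ddet_one lam, ?_, ?_, ?_⟩
  · simpa [Ddet_zero, Ddet_one] using Ddet_succ_succ lam 0
  · intro k hk
    obtain ⟨n, rfl⟩ := Nat.exists_eq_add_of_le' hk
    exact Ddet_succ_succ lam n
  · intro k hk
    obtain ⟨m, rfl⟩ := Nat.exists_eq_add_of_le' hk
    exact ⟨isUnit_det_Mmat hlam _, Mmat_inv_zero_last hlam m, Mmat_inv_last_last hlam (m + 1)⟩
end
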